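/- arXiv:2405.00171 — 6 statements merged into one kernel-verified Lean document; each statement's English description precedes it below -/
import Mathlib

section
/- Let A be a local algebra with maximal ideal m, let U ⊆ m be a K-linear subspace, and let z ∈ m be an element such that Ann(z) + U = m (as a sum of K-subspaces). Then for every b ∈ m there exists u ∈ U with exp(b)·z = exp(u)·z; in other words, the m-orbit of the line K·z coincides with its U-orbit. -/
/-- The exponential of an element of a finite-dimensional `K`-algebra:
`exp a = ∑_{i ≥ 0} a^i / i!`. -/
noncomputable def expn (K : Type*) [Field K] {A : Type*} [CommRing A] [Algebra K A]
    (a : A) : A :=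
  ∑ i ∈ Finset.range (Module.finrank K A + 1), ((i.factorial : K)⁻¹) • a ^ i

/-- Let `A` be a local algebra with maximal ideal `m`, let `U ⊆ m` be a
`K`-linear subspace, and let `z ∈ m` be an element such that `Ann(z) + U = m` as a sum of
`K`-subspaces.  Then for every `b ∈ m` there exists `u ∈ U` with `exp(b)·z = exp(u)·z`;
in other words, the `m`-orbit of the line `K·z` coincides with its `U`-orbit. -/
theorem stmt_2 (K : Type*) [Field K] [IsAlgClosed K] [CharZero K]
    (A : Type*) [CommRing A] [Algebra K A] [IsLocalRing A] [FiniteDimensional K A]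
    (U : Submodule K A)
    (hUm : U ≤ (IsLocalRing.maximalIdeal A).restrictScalars K)
    (z : A) (hz : z ∈ IsLocalRing.maximalIdeal A)
    (hsum : (Ideal.torsionOf A A z).restrictScalars K ⊔ U
        = (IsLocalRing.maximalIdeal A).restrictScalars K) :
    ∀ b ∈ IsLocalRing.maximalIdeal A, ∃ u ∈ U, expn K b * z = expn K u * z := by
  intro b hb
  have hb' : b ∈ (IsLocalRing.maximalIdeal A).restrictScalars K := hb
  rw [← hsum] at hb' 
  obtain ⟨a, ha, u, hu, hau⟩ := Submodule.mem_sup.mp hb'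
  rw [Submodule.restrictScalars_mem, Ideal.mem_torsionOf_iff, smul_eq_mul] at ha
  refine ⟨u, hu, ?_⟩
  have key : ∀ i : ℕ, (a + u) ^ i * z = u ^ i * z := by
    intro i
    induction i with
    | zero => simp
    | succ n ih =>
      calc (a + u) ^ (n + 1) * z = (a + u) ^ n * ((a + u) * z) := by ring
        _ = (a + u) ^ n * (u * z) := by rw [add_mul, ha, zero_add]
        _ = u * ((a + u) ^ n * z) := by ring
        _ = u * (u ^ n * z) := by rw [ih]
        _ = u ^ (n + 1) * z := by ring
  rw [← hau]
  simp only [expn, Finset.sum_mul, smul_mul_assoc]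
  exact Finset.sum_congr rfl fun i _ => by rw [key i]
end

section
/- Let (A, U) be an H-pair. If dim_K Soc(A) ≥ 2, then the boundary set B has infinitely many U-equivalence classes. More precisely, every nonzero element of Soc(A) lies in B, and two nonzero elements z, w ∈ Soc(A) are U-equivalent if and only if they are proportional over K. -/
/-- Let `(A, U)` be an `H`-pair of degree `d`.  If `dim_K Soc(A) ≥ 2`
(where `Soc(A) = {z : z·m = 0} = (0 : m)` is the socle), then the boundary set
`B = {z ∈ m : z ≠ 0, z^d ∈ U}` has infinitely many `U`-equivalence classes.  More
precisely, every nonzero element of `Soc(A)` lies in `B`, and two nonzero elements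
`z, w ∈ Soc(A)` are `U`-equivalent if and only if they are proportional over `K`. -/
theorem stmt_6 (K : Type*) [Field K] [IsAlgClosed K] [CharZero K]
    (A : Type*) [CommRing A] [Algebra K A] [IsLocalRing A] [FiniteDimensional K A]
    (U : Submodule K A)
    (hUm : U ≤ (IsLocalRing.maximalIdeal A).restrictScalars K)
    (hcodim : Module.finrank K U + 1
        = Module.finrank K ((IsLocalRing.maximalIdeal A).restrictScalars K))
    (hgen : Algebra.adjoin K (U : Set A) = ⊤)
    (d : ℕ)
    (hd1 : ¬ ((IsLocalRing.maximalIdeal A ^ d).restrictScalars K ≤ U))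
    (hd2 : ∀ k : ℕ, d < k → (IsLocalRing.maximalIdeal A ^ k).restrictScalars K ≤ U)
    (hsoc : 2 ≤ Module.finrank K
        ((Submodule.colon (⊥ : Ideal A) (IsLocalRing.maximalIdeal A)).restrictScalars K)) :
    (∀ z : A, (∀ v ∈ IsLocalRing.maximalIdeal A, z * v = 0) → z ≠ 0 →
        z ∈ IsLocalRing.maximalIdeal A ∧ z ^ d ∈ U) ∧
    (∀ z w : A, (∀ v ∈ IsLocalRing.maximalIdeal A, z * v = 0) →
        (∀ v ∈ IsLocalRing.maximalIdeal A, w * v = 0) → z ≠ 0 → w ≠ 0 →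
        ((∃ u ∈ U, ∃ lam : K, lam ≠ 0 ∧ expn K u * z = lam • w) ↔
          ∃ c : K, c ≠ 0 ∧ w = c • z)) ∧
    ¬ ∃ F : Finset A, ∀ z : A, z ∈ IsLocalRing.maximalIdeal A → z ≠ 0 → z ^ d ∈ U →
        ∃ w ∈ F, ∃ u ∈ U, ∃ lam : K, lam ≠ 0 ∧ expn K u * z = lam • w := by
  classical
  set m := IsLocalRing.maximalIdeal A with hm
  have hU_ne : U ≠ m.restrictScalars K := by
    intro h; rw [h] at hcodim; omega
  have hd_ge1 : 1 ≤ d := by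
    by_contra h
    have h1 := hd2 1 (by omega)
    rw [pow_one] at h1
    exact hU_ne (le_antisymm hUm h1)
  have hm_ne : m ≠ ⊥ := by
    intro h
    apply hd1
    have h0 : m ^ d = ⊥ := by
      rw [h, ← Ideal.zero_eq_bot]
      exact zero_pow (by omega)
    rw [h0]
    simp
  -- generation: m ≤ U ⊔ m²
  have hspan : (m.restrictScalars K : Submodule K A)
      ≤ U ⊔ (m ^ 2).restrictScalars K := by
    set N : Submodule K A := U ⊔ (m ^ 2).restrictScalars K with hN
    have hNm : N ≤ m.restrictScalars K := by
      apply sup_le hUm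
      intro a ha
      exact Ideal.pow_le_self (by omega) ha
    intro x hx
    have hx' : x ∈ Subalgebra.toSubmodule (Algebra.adjoin K (U : Set A)) := by
      rw [hgen]; trivial
    rw [Algebra.adjoin_eq_span] at hx'
    have hsub : (Submonoid.closure (U : Set A) : Set A)
        ⊆ ((Submodule.span K {(1 : A)}) ⊔ N : Submodule K A) := by
      intro y hy
      have hy' : y = 1 ∨ y ∈ N := by
        induction hy using Submonoid.closure_induction with
        | mem a ha => exact Or.inr (le_sup_left (α := Submodule K A) ha)
        | one => exact Or.inl rfl
        | mul a b _ _ iha ihb =>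
          rcases iha with rfl | ha
          · rcases ihb with rfl | hb
            · exact Or.inl (one_mul 1)
            · rw [one_mul]; exact Or.inr hb
          · rcases ihb with rfl | hb
            · rw [mul_one]; exact Or.inr ha
            · refine Or.inr (le_sup_right (α := Submodule K A) ?_)
              show a * b ∈ (m ^ 2).restrictScalars K
              rw [pow_two]
              exact Ideal.mul_mem_mul (hNm ha) (hNm hb)
      rcases hy' with rfl | hyN
      · exact le_sup_left (α := Submodule K A) (Submodule.mem_span_singleton_self 1)
      · exact le_sup_right (α := Submodule K A) hyN
    have hx2 : x ∈ (Submodule.span K {(1 : A)} ⊔ N : Submodule K A) :=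
      (Submodule.span_le.mpr hsub) hx'
    rcases Submodule.mem_sup.mp hx2 with ⟨a, ha, b, hb, hab⟩
    rcases Submodule.mem_span_singleton.mp ha with ⟨c, rfl⟩
    have hc0 : c = 0 := by
      by_contra hc
      have h1m : c • (1 : A) ∈ m.restrictScalars K := by
        have : c • (1 : A) = x - b := by rw [← hab]; ring
        rw [this]
        exact Submodule.sub_mem _ hx (hNm hb)
      have : (1 : A) ∈ m.restrictScalars K := by
        have := (m.restrictScalars K).smul_mem c⁻¹ h1m
        rwa [smul_smul, inv_mul_cancel₀ hc, one_smul] at this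
      exact (IsLocalRing.maximalIdeal.isMaximal A).ne_top (Ideal.eq_top_of_isUnit_mem m this isUnit_one)
    rw [hc0, zero_smul, zero_add] at hab
    rw [← hab]; exact hb
  have hd_ge2 : 2 ≤ d := by
    by_contra h
    have h2 : ((m ^ 2).restrictScalars K) ≤ U := hd2 2 (by omega)
    exact hU_ne (le_antisymm hUm (hspan.trans (sup_le le_rfl h2)))
  -- exponential acts trivially on socle
  have hexp : ∀ u z : A, u ∈ m → (∀ v ∈ m, z * v = 0) → expn K u * z = z := by
    intro u z hu hz
    unfold expn
    rw [Finset.sum_mul, Finset.sum_eq_single 0]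
    · simp
    · intro i hi hi0
      have hui : u ^ i ∈ m := by
        obtain ⟨j, rfl⟩ : ∃ j, i = j + 1 := ⟨i - 1, by omega⟩
        rw [pow_succ]
        exact Ideal.mul_mem_left _ _ hu
      rw [smul_mul_assoc, mul_comm, hz _ hui, smul_zero]
    · intro h0
      simp at h0
  -- nonzero socle elements lie in m
  have hmem : ∀ z : A, (∀ v ∈ m, z * v = 0) → z ≠ 0 → z ∈ m := by
    intro z hz hz0
    by_contra h
    have hu : IsUnit z := by
      rw [IsLocalRing.mem_maximalIdeal, mem_nonunits_iff, not_not] at h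
      exact h
    apply hm_ne
    rw [eq_bot_iff]
    intro v hv
    have := hz v hv
    rw [hu.mul_right_eq_zero] at this
    simp [this]
  have hpow : ∀ z : A, (∀ v ∈ m, z * v = 0) → z ≠ 0 → z ^ d = 0 := by
    intro z hz hz0
    have hzm : z ∈ m := hmem z hz hz0
    have hsq : z * z = 0 := hz z hzm
    have : z ^ d = z ^ (d - 2) * (z * z) := by
      rw [← pow_two, ← pow_add]
      congr 1
      omega
    rw [this, hsq, mul_zero]
  refine ⟨?_, ?_, ?_⟩
  · intro z hz hz0
    refine ⟨hmem z hz hz0, ?_⟩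
    rw [hpow z hz hz0]
    exact U.zero_mem
  · intro z w hz hw hz0 hw0
    constructor
    · rintro ⟨u, huU, lam, hlam, heq⟩
      rw [hexp u z (hUm huU) hz] at heq
      refine ⟨lam⁻¹, inv_ne_zero hlam, ?_⟩
      rw [heq, smul_smul, inv_mul_cancel₀ hlam, one_smul]
    · rintro ⟨c, hc, rfl⟩
      refine ⟨0, U.zero_mem, c⁻¹, inv_ne_zero hc, ?_⟩
      rw [hexp 0 z m.zero_mem hz, smul_smul, inv_mul_cancel₀ hc, one_smul]
  · rintro ⟨F, hF⟩
    set S := (Submodule.colon (⊥ : Ideal A) m).restrictScalars K with hS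
    have hSmem : ∀ z : A, z ∈ S ↔ ∀ v ∈ m, z * v = 0 := by
      intro z
      constructor
      · intro h v hv
        have := Submodule.mem_colon.mp h v hv
        simpa using this
      · intro h
        apply Submodule.mem_colon.mpr
        intro v hv
        simp [smul_eq_mul, h v hv]
    have hS_ne : S ≠ ⊥ := by
      intro h
      rw [h] at hsoc
      simp at hsoc
    obtain ⟨x, hxS, hx0⟩ := (Submodule.ne_bot_iff S).mp hS_ne
    have hy : ∃ y ∈ S, y ∉ Submodule.span K {x} := by
      by_contra h
      push_neg at h
      have hle : S ≤ Submodule.span K {x} := h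
      have := Submodule.finrank_mono hle
      rw [finrank_span_singleton hx0] at this
      omega
    obtain ⟨y, hyS, hyx⟩ := hy
    have hz_mem : ∀ c : K, x + c • y ∈ S := fun c => S.add_mem hxS (S.smul_mem c hyS)
    have hz_soc : ∀ c : K, ∀ v ∈ m, (x + c • y) * v = 0 :=
      fun c => (hSmem _).mp (hz_mem c)
    have hz_ne : ∀ c : K, x + c • y ≠ 0 := by
      intro c h
      by_cases hc : c = 0
      · rw [hc, zero_smul, add_zero] at h
        exact hx0 h
      · apply hyx
        rw [Submodule.mem_span_singleton]
        refine ⟨-c⁻¹, ?_⟩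
        have hcy : c • y = -x := by
          have h' := eq_neg_of_add_eq_zero_right h
          rw [h']
        calc (-c⁻¹) • x = c⁻¹ • (-x) := by rw [neg_smul, smul_neg]
          _ = c⁻¹ • (c • y) := by rw [hcy]
          _ = y := by rw [smul_smul, inv_mul_cancel₀ hc, one_smul]
    have key : ∀ c : K, ∃ w ∈ F, ∃ lam : K, lam ≠ 0 ∧ x + c • y = lam • w := by
      intro c
      obtain ⟨w, hwF, u, huU, lam, hlam, heq⟩ :=
        hF (x + c • y) (hmem _ (hz_soc c) (hz_ne c)) (hz_ne c)
          (by rw [hpow _ (hz_soc c) (hz_ne c)]; exact U.zero_mem)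
      rw [hexp u _ (hUm huU) (hz_soc c)] at heq
      exact ⟨w, hwF, lam, hlam, heq⟩
    let f : K → F := fun c => ⟨(key c).choose, (key c).choose_spec.1⟩
    obtain ⟨c, c', hne, hfe⟩ := Finite.exists_ne_map_eq_of_infinite f
    obtain ⟨lam, hlam, heq⟩ := (key c).choose_spec.2
    obtain ⟨lam', hlam', heq'⟩ := (key c').choose_spec.2
    have hww : (key c).choose = (key c').choose := congrArg Subtype.val hfe
    rw [← hww] at heq'
    have hcomb : lam' • (x + c • y) = lam • (x + c' • y) := by
      rw [heq, heq', smul_smul, smul_smul, mul_comm]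
    have h2 : (lam' - lam) • x = (lam * c' - lam' * c) • y := by
      rw [smul_add, smul_add, smul_smul, smul_smul] at hcomb
      rw [sub_smul, sub_smul]
      linear_combination (norm := module) hcomb
    by_cases hcoef : lam * c' - lam' * c = 0
    · have hx2 : (lam' - lam) • x = 0 := by rw [h2, hcoef, zero_smul]
      have hll : lam' = lam := by
        rcases smul_eq_zero.mp hx2 with h | h
        · exact sub_eq_zero.mp h
        · exact absurd h hx0
      apply hne
      have : lam * c' = lam * c := by
        have := sub_eq_zero.mp hcoef
        rw [this, hll]
      exact (mul_left_cancel₀ hlam this).symm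
    · apply hyx
      rw [Submodule.mem_span_singleton]
      refine ⟨(lam * c' - lam' * c)⁻¹ * (lam' - lam), ?_⟩
      rw [mul_smul, h2, smul_smul, inv_mul_cancel₀ hcoef, one_smul]
end

section
/- Let (A, U) be an H-pair. If the boundary set B has only finitely many U-equivalence classes, then dim_K(m/m²) ≤ 2 and dim_K(m^k/m^{k+1}) ≤ 1 for every integer k ≥ 2; that is, the Hilbert–Samuel sequence (dim_K A/m, dim_K m/m², dim_K m²/m³, …) of A is either (1, 1, 1, …, 1) or (1, 2, 1, …, 1). -/
section Aux

open IsLocalRing Polynomial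

variable {K : Type*} [Field K] {A : Type*} [CommRing A] [Algebra K A]

lemma expn_mem [IsLocalRing A] (u : A) (hu : u ∈ maximalIdeal A) :
    ∃ s ∈ maximalIdeal A, expn K u = 1 + s := by
  refine ⟨∑ i ∈ Finset.range (Module.finrank K A),
      (((i + 1).factorial : K)⁻¹) • u ^ (i + 1), ?_, ?_⟩
  · refine Submodule.sum_mem _ fun i _ => ?_
    rw [Algebra.smul_def]
    refine Ideal.mul_mem_left _ _ ?_
    rw [pow_succ]
    exact Ideal.mul_mem_left _ _ hu
  · rw [expn, Finset.sum_range_succ']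
    simp [add_comm]

lemma key_sub_mem [IsLocalRing A] {j : ℕ} {u u' z z' w : A}
    (hu : u ∈ maximalIdeal A) (hu' : u' ∈ maximalIdeal A)
    (hz : z ∈ maximalIdeal A ^ j) (hz' : z' ∈ maximalIdeal A ^ j)
    {l l' : K} (h1 : expn K u * z = l • w) (h2 : expn K u' * z' = l' • w) :
    l • z' - l' • z ∈ maximalIdeal A ^ (j + 1) := by
  obtain ⟨s, hs, hes⟩ := expn_mem (K := K) u hu
  obtain ⟨s', hs', hes'⟩ := expn_mem (K := K) u' hu'
  have e1 : l • w = z + s * z := by rw [← h1, hes]; ring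
  have e2 : l' • w = z' + s' * z' := by rw [← h2, hes']; ring
  have e4 : l' • (z + s * z) = l • (z' + s' * z') := by
    rw [← e1, ← e2]; exact smul_comm _ _ _
  have e5 : l • z' - l' • z = l' • (s * z) - l • (s' * z') := by
    simp only [Algebra.smul_def] at e4 ⊢
    linear_combination -e4
  rw [e5]
  have hsz : s * z ∈ maximalIdeal A ^ (j + 1) := by
    rw [pow_succ, mul_comm s z]
    exact Ideal.mul_mem_mul hz hs
  have hsz' : s' * z' ∈ maximalIdeal A ^ (j + 1) := by
    rw [pow_succ, mul_comm s' z']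
    exact Ideal.mul_mem_mul hz' hs'
  refine sub_mem ?_ ?_
  · rw [Algebra.smul_def]; exact Ideal.mul_mem_left _ _ hsz
  · rw [Algebra.smul_def]; exact Ideal.mul_mem_left _ _ hsz'

lemma no_infinite_family [IsLocalRing A] {U : Submodule K A}
    (hUm : U ≤ (maximalIdeal A).restrictScalars K) {d : ℕ}
    (F : Finset A)
    (hF : ∀ z : A, z ∈ maximalIdeal A → z ≠ 0 → z ^ d ∈ U →
        ∃ w ∈ F, ∃ u ∈ U, ∃ lam : K, lam ≠ 0 ∧ expn K u * z = lam • w)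
    {j : ℕ} (T : Type*) [Infinite T] (z : T → A)
    (hzm : ∀ t, z t ∈ maximalIdeal A)
    (hz0 : ∀ t, z t ≠ 0) (hzU : ∀ t, (z t) ^ d ∈ U)
    (hzj : ∀ t, z t ∈ maximalIdeal A ^ j)
    (hsep : ∀ s t : T, ∀ a b : K, a ≠ 0 → b ≠ 0 →
        a • z s - b • z t ∈ maximalIdeal A ^ (j + 1) → s = t) : False := by
  choose w hw u hu lam hlam heq using fun t => hF (z t) (hzm t) (hz0 t) (hzU t)
  have hinj : Function.Injective fun t => (⟨w t, hw t⟩ : {a // a ∈ F}) := by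
    intro s t hst
    have hws : w s = w t := congrArg Subtype.val hst
    have hmem : lam t • z s - lam s • z t ∈ maximalIdeal A ^ (j + 1) :=
      key_sub_mem (hUm (hu t)) (hUm (hu s)) (hzj t) (hzj s) (heq t) (hws ▸ heq s)
    exact hsep s t (lam t) (lam s) (hlam t) (hlam s) hmem
  haveI : Finite T := Finite.of_injective _ hinj
  exact _root_.not_finite T

lemma exists_root_aux [IsAlgClosed K]
    (ψ : A →ₗ[K] K) (x' c0 : A) (d : ℕ) (hd : 1 ≤ d) (hlead : ψ (x' ^ d) ≠ 0) :
    ∃ a : K, ψ ((a • x' + c0) ^ d) = 0 := by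
  set ζ : A[X] := C x' * X + C c0 with hζ
  have h1 : ζ.natDegree ≤ 1 := by
    refine le_trans (natDegree_add_le _ _) ?_
    simp only [natDegree_C, max_le_iff]
    exact ⟨le_trans (natDegree_C_mul_le _ _) natDegree_X_le, Nat.zero_le _⟩
  have hnd : (ζ ^ d).natDegree ≤ d :=
    le_trans natDegree_pow_le (by nlinarith)
  have hterm : ∀ i, (C x' * X) ^ i * (C c0) ^ (d - i) * ((d.choose i : ℕ) : A[X])
      = C (x' ^ i * c0 ^ (d - i) * ((d.choose i : ℕ) : A)) * X ^ i := by
    intro i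
    rw [mul_pow, ← C_pow, ← C_pow, ← C_eq_natCast, C_mul, C_mul]
    ring
  have hcoeff : (ζ ^ d).coeff d = x' ^ d := by
    rw [hζ, add_pow, finset_sum_coeff]
    rw [Finset.sum_congr rfl (fun i _ => by rw [hterm i])]
    simp only [coeff_C_mul, coeff_X_pow]
    rw [Finset.sum_eq_single d]
    · simp
    · intro i _ hi
      simp [Ne.symm hi]
    · intro h
      exact absurd (Finset.self_mem_range_succ d) h
  set q : K[X] := ∑ i ∈ Finset.range (d + 1), C (ψ ((ζ ^ d).coeff i)) * X ^ i with hq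
  have hqd : q.coeff d = ψ (x' ^ d) := by
    rw [hq, finset_sum_coeff]
    simp only [coeff_C_mul, coeff_X_pow]
    rw [Finset.sum_eq_single d]
    · simp [hcoeff]
    · intro i _ hi
      simp [Ne.symm hi]
    · intro h
      exact absurd (Finset.self_mem_range_succ d) h
  have hq0 : q ≠ 0 := fun h => hlead (by rw [← hqd, h, coeff_zero])
  have hdq : d ≤ q.natDegree := le_natDegree_of_ne_zero (by rw [hqd]; exact hlead)
  have hdeg : q.degree ≠ 0 := by
    rw [degree_eq_natDegree hq0]
    intro h
    have h0 : q.natDegree = 0 := by exact_mod_cast h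
    omega
  obtain ⟨a, ha⟩ := IsAlgClosed.exists_root q hdeg
  refine ⟨a, ?_⟩
  have hev : (a • x' + c0) ^ d = Polynomial.eval (algebraMap K A a) (ζ ^ d) := by
    rw [eval_pow, hζ]
    congr 1
    rw [eval_add, eval_mul, eval_C, eval_C, eval_X, Algebra.smul_def]
    ring
  have hsum : Polynomial.eval (algebraMap K A a) (ζ ^ d)
      = ∑ i ∈ Finset.range (d + 1), a ^ i • (ζ ^ d).coeff i := by
    rw [eval_eq_sum_range' (lt_of_le_of_lt hnd (Nat.lt_succ_self d))]
    refine Finset.sum_congr rfl fun i _ => ?_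
    rw [Algebra.smul_def, map_pow]
    ring
  have hψ : ψ ((a • x' + c0) ^ d)
      = ∑ i ∈ Finset.range (d + 1), ψ ((ζ ^ d).coeff i) * a ^ i := by
    rw [hev, hsum, map_sum]
    refine Finset.sum_congr rfl fun i _ => ?_
    rw [map_smul, smul_eq_mul, mul_comm]
  rw [hψ]
  have := ha
  rw [Polynomial.IsRoot, hq] at this
  simpa [eval_finset_sum] using this

end Aux

set_option maxHeartbeats 2000000 in
/-- Let `(A, U)` be an `H`-pair of degree `d`.  If the boundary set
`B = {z ∈ m : z ≠ 0, z^d ∈ U}` has only finitely many `U`-equivalence classes, then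
`dim_K (m/m²) ≤ 2` and `dim_K (m^k/m^{k+1}) ≤ 1` for every integer `k ≥ 2` (stated here
as `dim m^k ≤ dim m^{k+1} + (codimension bound)`, which is equivalent since everything is
finite dimensional); that is, the Hilbert–Samuel sequence of `A` is either `(1, 1, …, 1)`
or `(1, 2, 1, …, 1)`. -/
theorem stmt_7 (K : Type*) [Field K] [IsAlgClosed K] [CharZero K]
    (A : Type*) [CommRing A] [Algebra K A] [IsLocalRing A] [FiniteDimensional K A]
    (U : Submodule K A)
    (hUm : U ≤ (IsLocalRing.maximalIdeal A).restrictScalars K)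
    (hcodim : Module.finrank K U + 1
        = Module.finrank K ((IsLocalRing.maximalIdeal A).restrictScalars K))
    (hgen : Algebra.adjoin K (U : Set A) = ⊤)
    (d : ℕ)
    (hd1 : ¬ ((IsLocalRing.maximalIdeal A ^ d).restrictScalars K ≤ U))
    (hd2 : ∀ k : ℕ, d < k → (IsLocalRing.maximalIdeal A ^ k).restrictScalars K ≤ U)
    (hfin : ∃ F : Finset A, ∀ z : A, z ∈ IsLocalRing.maximalIdeal A → z ≠ 0 → z ^ d ∈ U →
        ∃ w ∈ F, ∃ u ∈ U, ∃ lam : K, lam ≠ 0 ∧ expn K u * z = lam • w) :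
    Module.finrank K ((IsLocalRing.maximalIdeal A).restrictScalars K)
      ≤ Module.finrank K ((IsLocalRing.maximalIdeal A ^ 2).restrictScalars K) + 2 ∧
    ∀ k : ℕ, 2 ≤ k →
      Module.finrank K ((IsLocalRing.maximalIdeal A ^ k).restrictScalars K)
        ≤ Module.finrank K ((IsLocalRing.maximalIdeal A ^ (k + 1)).restrictScalars K) + 1 := by
  classical
  obtain ⟨F, hF⟩ := hfin
  have hd0 : 1 ≤ d := by
    by_contra h
    have h1 := hd2 1 (by omega)
    rw [pow_one] at h1
    have hUe : U = (IsLocalRing.maximalIdeal A).restrictScalars K := le_antisymm hUm h1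
    rw [← hUe] at hcodim
    omega
  constructor
  · -- dim m/m² ≤ 2
    by_contra hcon
    push_neg at hcon
    set m := IsLocalRing.maximalIdeal A with hm
    set M : Submodule K A := m.restrictScalars K with hM
    have hle2 : (m ^ 2).restrictScalars K ≤ M := fun x hx => Ideal.pow_le_self two_ne_zero hx
    set W : Submodule K M := Submodule.comap M.subtype ((m ^ 2).restrictScalars K) with hW
    have hrank : Module.finrank K (M ⧸ W) + Module.finrank K ((m ^ 2).restrictScalars K)
        = Module.finrank K M := by
      rw [← LinearEquiv.finrank_eq (Submodule.comapSubtypeEquivOfLe hle2)]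
      exact Submodule.finrank_quotient_add_finrank W
    have hQ : 3 ≤ Module.finrank K (M ⧸ W) := by omega
    obtain ⟨e, he⟩ := exists_linearIndependent_of_le_finrank hQ
    have hcoe3 : ∀ α β γ : K, α • e 0 + β • e 1 + γ • e 2 = 0 → α = 0 ∧ β = 0 ∧ γ = 0 := by
      intro α β γ h
      have h2 := Fintype.linearIndependent_iff.mp he ![α, β, γ] (by
        simpa [Fin.sum_univ_three] using h)
      exact ⟨by simpa using h2 0, by simpa using h2 1, by simpa using h2 2⟩
    obtain ⟨x0, hx0⟩ := Submodule.Quotient.mk_surjective W (e 0)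
    obtain ⟨y0, hy0⟩ := Submodule.Quotient.mk_surjective W (e 1)
    obtain ⟨v0, hv0⟩ := Submodule.Quotient.mk_surjective W (e 2)
    set π := W.mkQ with hπdef
    have hx0' : π x0 = e 0 := hx0
    have hy0' : π y0 = e 1 := hy0
    have hv0' : π v0 = e 2 := hv0
    have hmemW : ∀ c : M, (c : A) ∈ m ^ 2 → π c = 0 := by
      intro c hc
      exact (Submodule.Quotient.mk_eq_zero W).mpr hc
    have hcoesmul : ∀ (α : K) (c : M), ((α • c : M) : A) = α • (c : A) := fun _ _ => rfl
    -- the set of parameters giving boundary elements on the line x + t y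
    set T : Set K := {t : K | ((x0 + t • y0 : M) : A) ^ d ∈ U} with hT
    by_cases hTinf : T.Infinite
    · haveI : Infinite ↥T := hTinf.to_subtype
      refine no_infinite_family hUm F hF (j := 1) (↥T)
        (fun t => ((x0 + (t : K) • y0 : M) : A)) ?_ ?_ ?_ ?_ ?_
      · intro t; exact (x0 + (t : K) • y0).2
      · intro t h0
        have hZ : (x0 + (t : K) • y0 : M) = 0 := ZeroMemClass.coe_eq_zero.mp h0
        have : (1 : K) • e 0 + (t : K) • e 1 + (0 : K) • e 2 = 0 := by
          have := congrArg π hZ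
          rw [map_add, map_smul, hx0', hy0', map_zero] at this
          rw [one_smul, zero_smul, add_zero]
          exact this
        have h3 := hcoe3 _ _ _ this
        exact one_ne_zero h3.1
      · intro t; exact t.2
      · intro t
        rw [pow_one]
        exact (x0 + (t : K) • y0).2
      · intro s t α β hα hβ hmem
        have hc : ((α • (x0 + (s : K) • y0) - β • (x0 + (t : K) • y0) : M) : A)
            = α • ((x0 + (s : K) • y0 : M) : A) - β • ((x0 + (t : K) • y0 : M) : A) := rfl
        have h0 : π (α • (x0 + (s : K) • y0) - β • (x0 + (t : K) • y0)) = 0 := by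
          refine hmemW _ ?_
          rw [hc]
          exact hmem
        rw [map_sub, map_smul, map_smul, map_add, map_add, map_smul, map_smul,
          hx0', hy0'] at h0
        have h1 : (α - β) • e 0 + (α * (s : K) - β * (t : K)) • e 1 + (0 : K) • e 2 = 0 := by
          rw [← h0]; module
        obtain ⟨h2, h3, -⟩ := hcoe3 _ _ _ h1
        have hαβ : α = β := sub_eq_zero.mp h2
        have h6 : α * (s : K) = β * (t : K) := sub_eq_zero.mp h3
        rw [← hαβ] at h6
        exact Subtype.ext (mul_left_cancel₀ hα h6)
    · -- T finite: find t₀ with (x + t₀ y)^d ∉ U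
      have hTf : T.Finite := Set.not_infinite.mp hTinf
      obtain ⟨t₀, ht₀⟩ := hTf.infinite_compl.nonempty
      set X' : M := x0 + t₀ • y0 with hX'
      -- build the functional ψ
      set U' : Submodule K M := Submodule.comap M.subtype U with hU'
      have hrkU : Module.finrank K (M ⧸ U') + Module.finrank K U = Module.finrank K M := by
        rw [← LinearEquiv.finrank_eq (Submodule.comapSubtypeEquivOfLe hUm)]
        exact Submodule.finrank_quotient_add_finrank U'
      have hQU : Module.finrank K (M ⧸ U') = 1 := by omega
      have φe : (M ⧸ U') ≃ₗ[K] K := LinearEquiv.ofFinrankEq _ _ (by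
        rw [hQU, Module.finrank_self])
      set ψM : M →ₗ[K] K := φe.toLinearMap ∘ₗ U'.mkQ with hψM
      have hψMiff : ∀ c : M, ψM c = 0 ↔ (c : A) ∈ U := by
        intro c
        constructor
        · intro h
          have h1 : U'.mkQ c = 0 := by
            apply φe.injective
            rw [map_zero]
            exact h
          exact (Submodule.Quotient.mk_eq_zero U').mp h1
        · intro h
          have h1 : U'.mkQ c = 0 := (Submodule.Quotient.mk_eq_zero U').mpr h
          simp [hψM, h1]
      obtain ⟨N, hN⟩ := Submodule.exists_isCompl M
      set ψ : A →ₗ[K] K := ψM ∘ₗ (Submodule.linearProjOfIsCompl M N hN) with hψdef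
      have hψ : ∀ (zz : A) (hz : zz ∈ M), (ψ zz = 0 ↔ zz ∈ U) := by
        intro zz hz
        have h1 : Submodule.linearProjOfIsCompl M N hN zz = ⟨zz, hz⟩ :=
          Submodule.linearProjOfIsCompl_apply_left hN ⟨zz, hz⟩
        rw [hψdef, LinearMap.comp_apply, h1]
        exact hψMiff ⟨zz, hz⟩
      have hpowm : ∀ zz : A, zz ∈ m → zz ^ d ∈ m := by
        intro zz hz
        have h1 : zz ^ d = zz ^ (d - 1) * zz := by
          rw [← pow_succ]
          congr 1
          omega
        rw [h1]
        exact Ideal.mul_mem_left _ _ hz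
      have hlead : ψ ((X' : A) ^ d) ≠ 0 := by
        intro h0
        exact ht₀ ((hψ _ (hpowm _ X'.2)).mp h0)
      -- choose roots
      have hroots := fun t : K => exists_root_aux ψ (X' : A) ((y0 + t • v0 : M) : A) d hd0 hlead
      choose a ha using hroots
      set Z : K → M := fun t => a t • X' + (y0 + t • v0) with hZdef
      have hZcoe : ∀ t : K, ((Z t : M) : A) = a t • (X' : A) + ((y0 + t • v0 : M) : A) :=
        fun t => rfl
      have hX'img : π X' = e 0 + t₀ • e 1 := by
        rw [hX', map_add, map_smul, hx0', hy0']
      have himgZ : ∀ t : K, π (Z t)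
          = (a t) • e 0 + (a t * t₀ + 1) • e 1 + t • e 2 := by
        intro t
        have : π (Z t) = a t • π X' + (π y0 + t • π v0) := by
          rw [hZdef]
          simp only [map_add, map_smul]
        rw [this, hX'img, hy0', hv0']
        module
      refine no_infinite_family hUm F hF (j := 1) K (fun t => ((Z t : M) : A)) ?_ ?_ ?_ ?_ ?_
      · intro t; exact (Z t).2
      · intro t h0
        have hZ0 : Z t = 0 := ZeroMemClass.coe_eq_zero.mp h0
        have h1 : (a t) • e 0 + (a t * t₀ + 1) • e 1 + t • e 2 = 0 := by
          rw [← himgZ t, hZ0, map_zero]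
        obtain ⟨h2, h3, -⟩ := hcoe3 _ _ _ h1
        rw [h2] at h3
        simp at h3
      · intro t
        have h1 := ha t
        rw [← hZcoe t] at h1
        exact (hψ _ (hpowm _ (Z t).2)).mp h1
      · intro t
        rw [pow_one]
        exact (Z t).2
      · intro s t α β hα hβ hmem
        have h0 : π (α • Z s - β • Z t) = 0 := by
          refine hmemW _ ?_
          exact hmem
        rw [map_sub, map_smul, map_smul, himgZ s, himgZ t] at h0
        have h1 : (α * a s - β * a t) • e 0
            + ((α * a s * t₀ + α) - (β * a t * t₀ + β)) • e 1
            + (α * s - β * t) • e 2 = 0 := by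
          rw [← h0]; module
        obtain ⟨h2, h3, h4⟩ := hcoe3 _ _ _ h1
        have hαβ : α = β := by linear_combination h3 - t₀ * h2
        have h6 : α * s = β * t := sub_eq_zero.mp h4
        rw [← hαβ] at h6
        exact mul_left_cancel₀ hα h6
  · -- dim m^k/m^(k+1) ≤ 1 for k ≥ 2
    intro k hk
    by_contra hcon
    push_neg at hcon
    set m := IsLocalRing.maximalIdeal A with hm
    set Mk : Submodule K A := (m ^ k).restrictScalars K with hMk
    have hlek : (m ^ (k + 1)).restrictScalars K ≤ Mk := fun x hx =>
      Ideal.pow_le_pow_right (Nat.le_succ k) hx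
    set W : Submodule K Mk := Submodule.comap Mk.subtype ((m ^ (k + 1)).restrictScalars K)
      with hW
    have hrank : Module.finrank K (Mk ⧸ W)
        + Module.finrank K ((m ^ (k + 1)).restrictScalars K) = Module.finrank K Mk := by
      rw [← LinearEquiv.finrank_eq (Submodule.comapSubtypeEquivOfLe hlek)]
      exact Submodule.finrank_quotient_add_finrank W
    have hQ : 2 ≤ Module.finrank K (Mk ⧸ W) := by omega
    obtain ⟨e, he⟩ := exists_linearIndependent_of_le_finrank hQ
    have hcoe2 : ∀ α β : K, α • e 0 + β • e 1 = 0 → α = 0 ∧ β = 0 := by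
      intro α β h
      have h2 := Fintype.linearIndependent_iff.mp he ![α, β] (by
        simpa [Fin.sum_univ_two] using h)
      exact ⟨by simpa using h2 0, by simpa using h2 1⟩
    obtain ⟨x0, hx0⟩ := Submodule.Quotient.mk_surjective W (e 0)
    obtain ⟨y0, hy0⟩ := Submodule.Quotient.mk_surjective W (e 1)
    set π := W.mkQ with hπdef
    have hx0' : π x0 = e 0 := hx0
    have hy0' : π y0 = e 1 := hy0
    have hmemW : ∀ c : Mk, (c : A) ∈ m ^ (k + 1) → π c = 0 := by
      intro c hc
      exact (Submodule.Quotient.mk_eq_zero W).mpr hc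
    refine no_infinite_family hUm F hF (j := k) K
      (fun t => ((x0 + t • y0 : Mk) : A)) ?_ ?_ ?_ ?_ ?_
    · intro t
      exact Ideal.pow_le_self (by omega) (x0 + t • y0).2
    · intro t h0
      have hZ : (x0 + t • y0 : Mk) = 0 := ZeroMemClass.coe_eq_zero.mp h0
      have h1 : (1 : K) • e 0 + t • e 1 = 0 := by
        have := congrArg π hZ
        rw [map_add, map_smul, hx0', hy0', map_zero] at this
        rw [one_smul]
        exact this
      exact one_ne_zero (hcoe2 _ _ h1).1
    · intro t
      have h1 : ((x0 + t • y0 : Mk) : A) ^ d ∈ (m ^ k) ^ d :=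
        Ideal.pow_mem_pow (x0 + t • y0).2 d
      rw [← pow_mul] at h1
      exact hd2 (k * d) (by have h9 := Nat.mul_le_mul_right d hk; omega) h1
    · intro t; exact (x0 + t • y0).2
    · intro s t α β hα hβ hmem
      have h0 : π (α • (x0 + s • y0) - β • (x0 + t • y0)) = 0 := by
        refine hmemW _ ?_
        exact hmem
      rw [map_sub, map_smul, map_smul, map_add, map_add, map_smul, map_smul,
        hx0', hy0'] at h0
      have h1 : (α - β) • e 0 + (α * s - β * t) • e 1 = 0 := by
        rw [← h0]; module
      obtain ⟨h2, h3⟩ := hcoe2 _ _ h1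
      have hαβ : α = β := sub_eq_zero.mp h2
      have h6 : α * s = β * t := sub_eq_zero.mp h3
      rw [← hαβ] at h6
      exact mul_left_cancel₀ hα h6
end

section
/- Let n ≥ 2, let A = K[x]/(x^{n+1}) with maximal ideal m = (x), and for an integer i with 1 < i ≤ n let U_i = span_K{x, x², …, x^{i−1}, x^{i+1}, …, x^n}; then (A, U_i) is an H-pair of degree i. The boundary set B = {z ∈ m : z ≠ 0 and z^i ∈ U_i} has only finitely many U_i-equivalence classes if and only if i = n−1 or i = n. -/
/-- The truncated polynomial algebra `K[x]/(x^{n+1})`. -/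
abbrev TruncPoly (K : Type*) [Field K] (n : ℕ) : Type _ :=
  Polynomial K ⧸ Ideal.span {(Polynomial.X : Polynomial K) ^ (n + 1)}

/-- The image of `x` in `K[x]/(x^{n+1})`. -/
noncomputable abbrev truncX (K : Type*) [Field K] (n : ℕ) : TruncPoly K n :=
  Ideal.Quotient.mk (Ideal.span {(Polynomial.X : Polynomial K) ^ (n + 1)}) Polynomial.X

/-!
Write `x` for the image of `X` and `m = (x)`. Every nonzero `z` factors as `c • x ^ k * w`
with `c ≠ 0` and `w ≡ 1 mod m`.

If `i ≥ n - 1` and `z` lies in the boundary set, then `k ≥ 2` (for `k = 1` the coefficient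
of `x ^ i` in `z ^ i` is `c ^ i ≠ 0`), so every `x ^ j` with `1 ≤ j ≤ n - k` lies in `U_i`.
Removing the terms of `w` degree by degree with factors `exp (-e • x ^ j)` yields `u ∈ U_i`
with `exp u * z = c • x ^ k`, so finitely many powers of `x` represent all classes.

If `i ≤ n - 2`, the elements `x ^ 2 * exp (t • x ^ i)`, `t ∈ K`, lie in the boundary set and
are pairwise inequivalent: `exp v * (x ^ 2 * exp (t • x ^ i)) = μ • x ^ 2 * exp (s • x ^ i)`
gives `x ^ 2 * exp d = μ • x ^ 2` with `d = v + (t - s) • x ^ i ∈ m`; comparing coefficients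
of `x ^ 2` gives `μ = 1`, hence `x ^ 2 * d = 0`, so `d ∈ m ^ (n - 1) ⊆ U_i` and
`(t - s) • x ^ i ∈ U_i`, i.e. `t = s`. As `K` is infinite, no finite set of representatives
exists.

On `m`, `expn` agrees with Mathlib's `IsNilpotent.exp`, which provides
`exp (a + b) = exp a * exp b`.
-/

open Polynomial Finset

theorem expn_eq_exp {K A : Type*} [Field K] [CommRing A] [Algebra K A] [Module ℚ A] {a : A}
    (ha : a ^ (Module.finrank K A + 1) = 0) : expn K a = IsNilpotent.exp a := by
  rw [expn, IsNilpotent.exp_eq_sum ha]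
  exact sum_congr rfl fun i _ ↦ inv_natCast_smul_eq K ℚ _ _

theorem IsNilpotent.exists_exp_eq_one_add_add_sq_mul {A : Type*} [CommRing A] [Algebra ℚ A]
    {a : A} (ha : IsNilpotent a) : ∃ h, exp a = 1 + a + a ^ 2 * h := by
  obtain ⟨k, hk⟩ := ha
  refine ⟨∑ i ∈ range k, ((i + 2).factorial : ℚ)⁻¹ • a ^ i, ?_⟩
  rw [exp_eq_sum (pow_eq_zero_of_le (by omega : k ≤ k + 2) hk), sum_range_succ', sum_range_succ',
    mul_sum]
  simp only [mul_smul_comm, ← pow_add, add_comm 2, zero_add, Nat.factorial_zero,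
    Nat.factorial_one, Nat.cast_one, inv_one, one_smul, pow_zero, pow_one]
  abel

def UEquiv (K : Type*) [Field K] {A : Type*} [CommRing A] [Algebra K A] (U : Submodule K A)
    (z w : A) : Prop :=
  ∃ u ∈ U, ∃ lam : K, lam ≠ 0 ∧ expn K u * z = lam • w

def HasFiniteBoundaryClasses (K : Type*) [Field K] {A : Type*} [CommRing A] [Algebra K A]
    (U : Submodule K A) (m : Ideal A) (d : ℕ) : Prop :=
  ∃ F : Finset A, ∀ z : A, z ∈ m → z ≠ 0 → z ^ d ∈ U → ∃ w ∈ F, UEquiv K U z w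

namespace TruncPoly

variable {K : Type*} [Field K] {n : ℕ}

theorem mk_eq_aeval (p : K[X]) :
    Ideal.Quotient.mk (Ideal.span {(X : K[X]) ^ (n + 1)}) p = aeval (truncX K n) p :=
  (AdjoinRoot.aeval_eq p).symm

theorem mk_smul (c : K) (p : K[X]) :
    Ideal.Quotient.mk (Ideal.span {(X : K[X]) ^ (n + 1)}) (c • p) = c • Ideal.Quotient.mk _ p :=
  rfl

-- `Algebra.smul_def` does not rewrite here: the `SMul` instance of the quotient is
-- `Submodule.Quotient.instSMul'`.
theorem smul_eq_algebraMap_mul (c : K) (z : TruncPoly K n) : c • z = algebraMap K _ c * z :=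
  Algebra.smul_def c z

theorem truncX_pow_eq_zero {k : ℕ} (hk : n < k) : truncX K n ^ k = 0 := by
  rw [← map_pow, Ideal.Quotient.eq_zero_iff_mem, Ideal.mem_span_singleton]
  exact pow_dvd_pow X hk

theorem truncX_pow_dvd_mk_iff {N : ℕ} (hN : N ≤ n + 1) {p : K[X]} :
    truncX K n ^ N ∣ Ideal.Quotient.mk _ p ↔ X ^ N ∣ p := by
  constructor
  · rintro ⟨q, hq⟩
    obtain ⟨q, rfl⟩ := Ideal.Quotient.mk_surjective q
    rw [← map_pow, ← map_mul, Ideal.Quotient.eq, Ideal.mem_span_singleton] at hq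
    exact (dvd_sub_left (dvd_mul_right _ _)).mp ((pow_dvd_pow X hN).trans hq)
  · rintro ⟨q, rfl⟩
    exact ⟨Ideal.Quotient.mk _ q, by rw [map_mul, map_pow]⟩

theorem eq_zero_of_truncX_pow_succ_dvd {k : ℕ} (hk : k ≤ n) {c : K}
    (h : truncX K n ^ (k + 1) ∣ c • truncX K n ^ k) : c = 0 := by
  rw [show c • truncX K n ^ k = Ideal.Quotient.mk _ (c • X ^ k) by rw [mk_smul, map_pow],
    truncX_pow_dvd_mk_iff (by omega), X_pow_dvd_iff] at h
  simpa using h k (by omega)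

theorem truncX_pow_ne_zero {k : ℕ} (hk : k ≤ n) : truncX K n ^ k ≠ 0 := fun h ↦
  one_ne_zero (eq_zero_of_truncX_pow_succ_dvd (K := K) hk (by rw [one_smul, h]; exact dvd_zero _))

theorem truncX_pow_dvd_of_truncX_pow_mul_eq_zero {a : ℕ} (ha : a ≤ n + 1) {z : TruncPoly K n}
    (h : truncX K n ^ a * z = 0) : truncX K n ^ (n + 1 - a) ∣ z := by
  obtain ⟨p, rfl⟩ := Ideal.Quotient.mk_surjective z
  rw [← map_pow, ← map_mul] at h
  have hdvd := (truncX_pow_dvd_mk_iff le_rfl).mp (h ▸ dvd_zero _)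
  rw [← Nat.add_sub_cancel' ha, pow_add, mul_dvd_mul_iff_left (pow_ne_zero _ X_ne_zero)] at hdvd
  exact (truncX_pow_dvd_mk_iff (by omega)).mpr hdvd

theorem truncX_dvd_smul_truncX_pow {i : ℕ} (hi : 1 ≤ i) (c : K) :
    truncX K n ∣ c • truncX K n ^ i := by
  rw [smul_eq_algebraMap_mul]
  exact (dvd_pow_self _ (by omega)).mul_left _

theorem pow_succ_eq_zero_of_truncX_dvd {z : TruncPoly K n} (hz : truncX K n ∣ z) :
    z ^ (n + 1) = 0 := by
  obtain ⟨y, rfl⟩ := hz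
  rw [mul_pow, truncX_pow_eq_zero n.lt_succ_self, zero_mul]

theorem isNilpotent_of_truncX_dvd {z : TruncPoly K n} (hz : truncX K n ∣ z) : IsNilpotent z :=
  ⟨n + 1, pow_succ_eq_zero_of_truncX_dvd hz⟩

theorem truncX_dvd_of_mem {U : Submodule K (TruncPoly K n)}
    (hU : U ≤ (Ideal.span {truncX K n}).restrictScalars K) {u : TruncPoly K n} (hu : u ∈ U) :
    truncX K n ∣ u := by
  have := hU hu
  rwa [Submodule.restrictScalars_mem, Ideal.mem_span_singleton] at this

variable (K n) in
noncomputable def constantCoeff : TruncPoly K n →ₐ[K] K :=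
  Ideal.Quotient.liftₐ _ (aeval 0) fun p hp ↦ by
    obtain ⟨q, rfl⟩ := Ideal.mem_span_singleton.mp hp
    simp

theorem constantCoeff_mk (p : K[X]) :
    constantCoeff K n (Ideal.Quotient.mk _ p) = p.coeff 0 := by
  simp [constantCoeff, coeff_zero_eq_aeval_zero]

theorem truncX_dvd_iff {z : TruncPoly K n} : truncX K n ∣ z ↔ constantCoeff K n z = 0 := by
  obtain ⟨p, rfl⟩ := Ideal.Quotient.mk_surjective z
  rw [constantCoeff_mk, ← X_dvd_iff]
  simpa only [pow_one] using truncX_pow_dvd_mk_iff (n := n) (N := 1) (by omega) (p := p)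

theorem truncX_dvd_sub_algebraMap (z : TruncPoly K n) :
    truncX K n ∣ z - algebraMap K _ (constantCoeff K n z) := by
  rw [truncX_dvd_iff, map_sub, AlgHom.commutes, Algebra.algebraMap_self_apply, sub_self]

theorem isUnit_or_truncX_dvd (z : TruncPoly K n) : IsUnit z ∨ truncX K n ∣ z := by
  by_cases hz : constantCoeff K n z = 0
  · exact .inr (truncX_dvd_iff.mpr hz)
  · have hc : IsUnit (algebraMap K (TruncPoly K n) (constantCoeff K n z)) :=
      (isUnit_iff_ne_zero.mpr hz).map _
    have := (isNilpotent_of_truncX_dvd (truncX_dvd_sub_algebraMap z)).isUnit_add_left_of_commute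
      hc (Commute.all _ _)
    exact .inl (by simpa using this)

theorem exists_eq_smul_truncX_pow_mul {z : TruncPoly K n} (hz : z ≠ 0) :
    ∃ c : K, c ≠ 0 ∧ ∃ k w, constantCoeff K n w = 1 ∧ z = c • (truncX K n ^ k * w) := by
  obtain ⟨p, rfl⟩ := Ideal.Quotient.mk_surjective z
  obtain ⟨q, hpq, hq⟩ :=
    exists_eq_pow_rootMultiplicity_mul_and_not_dvd p (by rintro rfl; exact hz (map_zero _)) 0
  rw [C_0, sub_zero] at hpq hq
  rw [X_dvd_iff] at hq
  generalize rootMultiplicity 0 p = k at hpq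
  subst hpq
  refine ⟨q.coeff 0, hq, k, (q.coeff 0)⁻¹ • Ideal.Quotient.mk _ q, ?_, ?_⟩
  · rw [map_smul, constantCoeff_mk, smul_eq_mul, inv_mul_cancel₀ hq]
  · rw [mul_smul_comm, smul_smul, mul_inv_cancel₀ hq, one_smul, map_mul, map_pow]

theorem finrank_eq : Module.finrank K (TruncPoly K n) = n + 1 :=
  (AdjoinRoot.powerBasis' (monic_X_pow (R := K) (n + 1))).finrank.trans (natDegree_X_pow _)

theorem linearIndepOn_truncX_pow : LinearIndepOn K (truncX K n ^ ·) (Set.Iic n) := by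
  let pb := AdjoinRoot.powerBasis' (monic_X_pow (R := K) (n + 1))
  have h : LinearIndependent K (fun j : Fin pb.dim ↦ truncX K n ^ (j : ℕ)) := by
    rw [show (fun j : Fin pb.dim ↦ truncX K n ^ (j : ℕ)) = pb.basis from
      funext fun j ↦ (pb.basis_eq_pow j).symm]
    exact pb.basis.linearIndependent
  have := (linearIndepOn_range_iff Fin.val_injective (truncX K n ^ ·)).mpr h
  rwa [Fin.range_val, show pb.dim = n + 1 by simp [pb], Set.Iio_add_one_eq_Iic] at this

theorem truncX_pow_mul_mem_span_Ici (k : ℕ) (y : TruncPoly K n) :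
    truncX K n ^ k * y ∈ Submodule.span K ((truncX K n ^ ·) '' Set.Ici k) := by
  obtain ⟨p, rfl⟩ := Ideal.Quotient.mk_surjective y
  rw [mk_eq_aeval, aeval_eq_sum_range, mul_sum]
  refine Submodule.sum_mem _ fun j _ ↦ ?_
  rw [mul_smul_comm, ← pow_add]
  exact Submodule.smul_mem _ _ (Submodule.subset_span ⟨k + j, by simp, rfl⟩)

theorem span_truncX_pow_le {S : Set ℕ} (hS : ∀ j ∈ S, 1 ≤ j) :
    Submodule.span K ((truncX K n ^ ·) '' S) ≤ (Ideal.span {truncX K n}).restrictScalars K := by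
  rw [Submodule.span_le]
  rintro _ ⟨j, hj, rfl⟩
  exact Ideal.mem_span_singleton.mpr (dvd_pow_self _ (by have := hS j hj; omega))

-- The subspace `U_i` of the paper.
variable (K n) in
noncomputable def gapSubspace (i : ℕ) : Submodule K (TruncPoly K n) :=
  Submodule.span K ((fun j : ℕ => truncX K n ^ j) '' {j : ℕ | 1 ≤ j ∧ j ≤ n ∧ j ≠ i})

section gapSubspace

variable {i : ℕ}

theorem truncX_pow_mem_gapSubspace {j : ℕ} (hj : 1 ≤ j) (hjn : j ≤ n) (hji : j ≠ i) :
    truncX K n ^ j ∈ gapSubspace K n i :=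
  Submodule.subset_span ⟨j, ⟨hj, hjn, hji⟩, rfl⟩

theorem gapSubspace_le : gapSubspace K n i ≤ (Ideal.span {truncX K n}).restrictScalars K :=
  span_truncX_pow_le fun _ hj ↦ hj.1

theorem mem_gapSubspace_of_truncX_pow_dvd {k : ℕ} (hik : i < k) {z : TruncPoly K n}
    (hz : truncX K n ^ k ∣ z) : z ∈ gapSubspace K n i := by
  obtain ⟨y, rfl⟩ := hz
  refine Submodule.span_le.mpr ?_ (truncX_pow_mul_mem_span_Ici k y)
  rintro _ ⟨j, hj, rfl⟩
  by_cases hjn : j ≤ n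
  · rw [Set.mem_Ici] at hj
    exact truncX_pow_mem_gapSubspace (by omega) hjn (by omega)
  · simp [truncX_pow_eq_zero (not_le.mp hjn)]

theorem smul_truncX_pow_mem_gapSubspace_iff (hi : i ≤ n) {c : K} :
    c • truncX K n ^ i ∈ gapSubspace K n i ↔ c = 0 := by
  refine ⟨fun h ↦ ?_, by rintro rfl; simp⟩
  have hS : insert i {j : ℕ | 1 ≤ j ∧ j ≤ n ∧ j ≠ i} ⊆ Set.Iic n := by
    rintro j (rfl | hj)
    exacts [hi, hj.2.1]
  refine (linearIndepOn_truncX_pow.mono hS).eq_zero_of_smul_mem_span (Set.mem_insert _ _) c ?_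
  rwa [Set.insert_sdiff_self_of_notMem (by simp)]

theorem eq_zero_of_smul_truncX_pow_mul_mem_gapSubspace (hi : i ≤ n) {c : K}
    {w : TruncPoly K n} (hw : constantCoeff K n w = 1)
    (h : c • (truncX K n ^ i * w) ∈ gapSubspace K n i) : c = 0 := by
  obtain ⟨s, hs⟩ := truncX_dvd_sub_algebraMap w
  rw [hw, map_one] at hs
  have hhigh : c • (truncX K n ^ i * w) - c • truncX K n ^ i ∈ gapSubspace K n i := by
    refine mem_gapSubspace_of_truncX_pow_dvd (by omega : i < i + 1) ⟨c • s, ?_⟩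
    rw [← smul_sub, ← mul_sub_one, hs, pow_succ (truncX K n) i, mul_smul_comm, mul_assoc]
  rw [← smul_truncX_pow_mem_gapSubspace_iff hi]
  simpa using sub_mem h hhigh

theorem finrank_gapSubspace (hi1 : 1 ≤ i) (hi : i ≤ n) :
    Module.finrank K (gapSubspace K n i) = n - 1 := by
  classical
  have hS : {j : ℕ | 1 ≤ j ∧ j ≤ n ∧ j ≠ i} = ↑((Finset.Icc 1 n).erase i) := by
    ext j
    simp [and_comm, and_assoc]
  have hli : LinearIndepOn K (truncX K n ^ ·) ↑((Finset.Icc 1 n).erase i) :=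
    linearIndepOn_truncX_pow.mono fun j hj ↦ (Finset.mem_Icc.mp (Finset.mem_of_mem_erase hj)).2
  rw [gapSubspace, hS, Set.image_eq_range, finrank_span_eq_card hli]
  simp only [Finset.coe_sort_coe, Fintype.card_coe]
  rw [Finset.card_erase_of_mem (Finset.mem_Icc.mpr ⟨hi1, hi⟩), Nat.card_Icc]
  omega

theorem adjoin_gapSubspace (hn : 1 ≤ n) (hi : i ≠ 1) :
    Algebra.adjoin K (gapSubspace K n i : Set (TruncPoly K n)) = ⊤ := by
  have hx : truncX K n ∈ gapSubspace K n i := by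
    simpa using truncX_pow_mem_gapSubspace (le_refl 1) hn hi.symm
  exact eq_top_mono (Algebra.adjoin_mono (Set.singleton_subset_iff.mpr hx))
    AdjoinRoot.adjoinRoot_eq_top

end gapSubspace

section CharZero

variable [CharZero K] {U : Submodule K (TruncPoly K n)}

theorem expn_eq_exp_of_truncX_dvd {a : TruncPoly K n} (ha : truncX K n ∣ a) :
    expn K a = IsNilpotent.exp a :=
  expn_eq_exp <| by
    rw [finrank_eq]
    exact pow_eq_zero_of_le (n + 1).le_succ (pow_succ_eq_zero_of_truncX_dvd ha)

theorem uEquiv_symm (hU : U ≤ (Ideal.span {truncX K n}).restrictScalars K)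
    {z w : TruncPoly K n} (h : UEquiv K U z w) : UEquiv K U w z := by
  obtain ⟨u, hu, lam, hlam, h⟩ := h
  have hxu := truncX_dvd_of_mem hU hu
  refine ⟨-u, U.neg_mem hu, lam⁻¹, inv_ne_zero hlam, ?_⟩
  rw [expn_eq_exp_of_truncX_dvd hxu] at h
  rw [expn_eq_exp_of_truncX_dvd (dvd_neg.mpr hxu), eq_inv_smul_iff₀ hlam, ← mul_smul_comm,
    ← h, ← mul_assoc, IsNilpotent.exp_neg_mul_exp_self (isNilpotent_of_truncX_dvd hxu), one_mul]

theorem uEquiv_trans (hU : U ≤ (Ideal.span {truncX K n}).restrictScalars K)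
    {z w y : TruncPoly K n} (h : UEquiv K U z w) (h' : UEquiv K U w y) : UEquiv K U z y := by
  obtain ⟨u, hu, lam, hlam, h⟩ := h
  obtain ⟨u', hu', lam', hlam', h'⟩ := h'
  have hxu := truncX_dvd_of_mem hU hu
  have hxu' := truncX_dvd_of_mem hU hu'
  refine ⟨u' + u, U.add_mem hu' hu, lam * lam', mul_ne_zero hlam hlam', ?_⟩
  rw [expn_eq_exp_of_truncX_dvd hxu] at h
  rw [expn_eq_exp_of_truncX_dvd hxu'] at h'
  rw [expn_eq_exp_of_truncX_dvd (dvd_add hxu' hxu),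
    IsNilpotent.exp_add_of_commute (Commute.all _ _) (isNilpotent_of_truncX_dvd hxu')
      (isNilpotent_of_truncX_dvd hxu),
    mul_assoc, h, mul_smul_comm, h', smul_smul]

-- If `exp u * w ≡ 1 + e • x ^ N` modulo `x ^ (N + 1)`, then `exp (u - e • x ^ N) * w ≡ 1`.
theorem exists_exp_mul_sub_one_dvd {w : TruncPoly K n} (hw : constantCoeff K n w = 1) {N : ℕ}
    (hN : 1 ≤ N) : ∃ u ∈ Submodule.span K ((truncX K n ^ ·) '' Set.Ico 1 N),
      truncX K n ^ N ∣ IsNilpotent.exp u * w - 1 := by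
  induction N, hN using Nat.le_induction with
  | base =>
    refine ⟨0, Submodule.zero_mem _, ?_⟩
    rw [IsNilpotent.exp_zero, one_mul, pow_one, truncX_dvd_iff, map_sub, hw, map_one, sub_self]
  | succ N hN ih =>
    obtain ⟨u, hu, r, hr⟩ := ih
    obtain ⟨s, hs⟩ := truncX_dvd_sub_algebraMap r
    set e := constantCoeff K n r
    set C := algebraMap K (TruncPoly K n) e
    have hxu : truncX K n ∣ u := truncX_dvd_of_mem (span_truncX_pow_le fun _ hj ↦ hj.1) hu
    have hxe : truncX K n ∣ -(e • truncX K n ^ N) :=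
      (truncX_dvd_smul_truncX_pow hN e).neg_right
    refine ⟨-(e • truncX K n ^ N) + u, add_mem (Submodule.neg_mem _ (Submodule.smul_mem _ _
      (Submodule.subset_span ⟨N, ⟨hN, N.lt_succ_self⟩, rfl⟩)))
      (Submodule.span_mono (Set.image_mono (Set.Ico_subset_Ico_right N.le_succ)) hu), ?_⟩
    obtain ⟨h, hh⟩ := (isNilpotent_of_truncX_dvd hxe).exists_exp_eq_one_add_add_sq_mul
    have hsq : truncX K n ^ (N + 1) ∣ truncX K n ^ N * truncX K n ^ N := by
      rw [← pow_add]
      exact pow_dvd_pow _ (by omega)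
    rw [IsNilpotent.exp_add_of_commute (Commute.all _ _) (isNilpotent_of_truncX_dvd hxe)
      (isNilpotent_of_truncX_dvd hxu), hh, mul_assoc, eq_add_of_sub_eq hr, eq_add_of_sub_eq hs,
      smul_eq_algebraMap_mul]
    exact (dvd_add (dvd_mul_right _ s) (hsq.mul_right
      (C ^ 2 * h * (truncX K n ^ N * (truncX K n * s + C) + 1) - C * (truncX K n * s + C)))).trans
      (dvd_of_eq (by ring))

theorem uEquiv_smul_truncX_pow_mul {k : ℕ} (hk : k ≤ n)
    (hU : ∀ j, 1 ≤ j → j + k ≤ n → truncX K n ^ j ∈ U) {c : K} (hc : c ≠ 0)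
    {w : TruncPoly K n} (hw : constantCoeff K n w = 1) :
    UEquiv K U (c • (truncX K n ^ k * w)) (truncX K n ^ k) := by
  obtain ⟨u, hu, r, hr⟩ := exists_exp_mul_sub_one_dvd hw (N := n + 1 - k) (by omega)
  refine ⟨u, Submodule.span_le.mpr ?_ hu, c, hc, ?_⟩
  · rintro _ ⟨j, ⟨hj1, hjN⟩, rfl⟩
    exact hU j hj1 (by omega)
  · rw [expn_eq_exp_of_truncX_dvd (truncX_dvd_of_mem (span_truncX_pow_le fun _ hj ↦ hj.1) hu),
      mul_smul_comm, mul_left_comm, eq_add_of_sub_eq hr, mul_add, mul_one, ← mul_assoc,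
      ← pow_add, truncX_pow_eq_zero (by omega), zero_mul, zero_add]

theorem not_uEquiv_truncX_sq_mul_exp {i : ℕ} (hi1 : 1 ≤ i) (hi : i + 2 ≤ n) {t s : K}
    (hts : t ≠ s) :
    ¬ UEquiv K (gapSubspace K n i) (truncX K n ^ 2 * IsNilpotent.exp (t • truncX K n ^ i))
      (truncX K n ^ 2 * IsNilpotent.exp (s • truncX K n ^ i)) := by
  rintro ⟨v, hv, μ, -, h⟩
  have hxi := truncX_dvd_smul_truncX_pow (K := K) (n := n) hi1
  have hxv := truncX_dvd_of_mem gapSubspace_le hv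
  have hnil {a : TruncPoly K n} (ha : truncX K n ∣ a) := isNilpotent_of_truncX_dvd ha
  set d := v + (t - s) • truncX K n ^ i
  have hxd : truncX K n ∣ d := dvd_add hxv (hxi _)
  have hexp : IsNilpotent.exp v * IsNilpotent.exp (t • truncX K n ^ i) =
      IsNilpotent.exp d * IsNilpotent.exp (s • truncX K n ^ i) := by
    rw [← IsNilpotent.exp_add_of_commute (Commute.all _ _) (hnil hxv) (hnil (hxi t)),
      ← IsNilpotent.exp_add_of_commute (Commute.all _ _) (hnil hxd) (hnil (hxi s)), add_assoc,
      ← add_smul, sub_add_cancel]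
  have hxd_exp : truncX K n ^ 2 * IsNilpotent.exp d = μ • truncX K n ^ 2 := by
    apply (IsNilpotent.isUnit_exp (hnil (hxi s))).mul_left_injective
    rw [expn_eq_exp_of_truncX_dvd hxv] at h
    dsimp only
    rw [smul_mul_assoc, ← h, mul_assoc, ← hexp]
    ring
  obtain ⟨g, hg⟩ := (hnil hxd).exists_exp_eq_one_add_add_sq_mul
  have hkey : (μ - 1) • truncX K n ^ 2 = truncX K n ^ 2 * d * (1 + d * g) := by
    rw [sub_smul, one_smul, ← hxd_exp, hg]
    ring
  have hμ : μ - 1 = 0 := by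
    refine eq_zero_of_truncX_pow_succ_dvd (show 2 ≤ n by omega) ?_
    rw [hkey, pow_succ (truncX K n) 2]
    exact (mul_dvd_mul_left _ hxd).mul_right _
  rw [hμ, zero_smul, eq_comm, (hnil (hxd.mul_right g)).isUnit_one_add.mul_left_eq_zero] at hkey
  have hdU : d ∈ gapSubspace K n i := mem_gapSubspace_of_truncX_pow_dvd (k := n + 1 - 2)
    (by omega) (truncX_pow_dvd_of_truncX_pow_mul_eq_zero (by omega) hkey)
  have hts' := sub_mem hdU hv
  rw [add_sub_cancel_left, smul_truncX_pow_mem_gapSubspace_iff (by omega), sub_eq_zero] at hts'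
  exact hts hts'

theorem hasFiniteBoundaryClasses {i : ℕ} (hi : n - 1 ≤ i) (hin : i ≤ n) :
    HasFiniteBoundaryClasses K (gapSubspace K n i) (Ideal.span {truncX K n}) i := by
  classical
  refine ⟨(Finset.range (n + 1)).image (truncX K n ^ ·), fun z hzm hz hzi ↦ ?_⟩
  obtain ⟨c, hc, k, w, hw, rfl⟩ := exists_eq_smul_truncX_pow_mul hz
  have hkn : k ≤ n := by
    by_contra hk
    exact hz (by rw [truncX_pow_eq_zero (by omega), zero_mul, smul_zero])
  have hk0 : k ≠ 0 := by
    rintro rfl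
    rw [Ideal.mem_span_singleton, truncX_dvd_iff, map_smul, pow_zero, one_mul, hw, smul_eq_mul,
      mul_one] at hzm
    exact hc hzm
  have hk1 : k ≠ 1 := by
    rintro rfl
    rw [_root_.smul_pow, mul_pow, pow_one] at hzi
    exact pow_ne_zero i hc (eq_zero_of_smul_truncX_pow_mul_mem_gapSubspace hin
      (by rw [map_pow, hw, one_pow]) hzi)
  exact ⟨_, Finset.mem_image_of_mem _ (Finset.mem_range.mpr (by omega)),
    uEquiv_smul_truncX_pow_mul hkn
      (fun j hj1 hjk ↦ truncX_pow_mem_gapSubspace hj1 (by omega) (by omega)) hc hw⟩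

theorem le_of_hasFiniteBoundaryClasses {i : ℕ} (hi1 : 1 ≤ i)
    (hF : HasFiniteBoundaryClasses K (gapSubspace K n i) (Ideal.span {truncX K n}) i) :
    n ≤ i + 1 := by
  obtain ⟨F, hF⟩ := hF
  by_contra! hi
  set z : K → TruncPoly K n := fun t ↦ truncX K n ^ 2 * IsNilpotent.exp (t • truncX K n ^ i)
  have hz2 (t : K) : truncX K n ^ 2 ∣ z t := dvd_mul_right _ _
  have hB (t : K) : ∃ w ∈ F, UEquiv K (gapSubspace K n i) (z t) w := by
    refine hF (z t) (Ideal.mem_span_singleton.mpr ((dvd_pow_self _ two_ne_zero).trans (hz2 t)))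
      ?_ (mem_gapSubspace_of_truncX_pow_dvd (k := 2 * i) (by omega) ?_)
    · rw [Ne, (IsNilpotent.isUnit_exp (isNilpotent_of_truncX_dvd
        (truncX_dvd_smul_truncX_pow hi1 t))).mul_left_eq_zero]
      exact truncX_pow_ne_zero (by omega)
    · rw [pow_mul]
      exact pow_dvd_pow_of_dvd (hz2 t) i
  choose w hwF hw using hB
  obtain ⟨t, s, hts, hwts⟩ :=
    Finite.exists_ne_map_eq_of_infinite fun t ↦ (⟨w t, hwF t⟩ : F)
  have hws : UEquiv K (gapSubspace K n i) (z s) (w t) := by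
    rw [show w t = w s from congrArg Subtype.val hwts]
    exact hw s
  exact not_uEquiv_truncX_sq_mul_exp hi1 (by omega) hts
    (uEquiv_trans gapSubspace_le (hw t) (uEquiv_symm gapSubspace_le hws))

end CharZero

end TruncPoly

theorem stmt_12_general (K : Type*) [Field K] [CharZero K]
    (n : ℕ) (i : ℕ) (hi1 : 1 < i) (hin : i ≤ n) :
    (∀ z : TruncPoly K n, IsUnit z ∨ z ∈ Ideal.span {truncX K n}) ∧
    (Submodule.span K ((fun j : ℕ => truncX K n ^ j) '' {j : ℕ | 1 ≤ j ∧ j ≤ n ∧ j ≠ i})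
        ≤ (Ideal.span {truncX K n}).restrictScalars K) ∧
    Module.finrank K (Submodule.span K
        ((fun j : ℕ => truncX K n ^ j) '' {j : ℕ | 1 ≤ j ∧ j ≤ n ∧ j ≠ i})) = n - 1 ∧
    Algebra.adjoin K ((Submodule.span K
        ((fun j : ℕ => truncX K n ^ j) '' {j : ℕ | 1 ≤ j ∧ j ≤ n ∧ j ≠ i}) :
          Submodule K (TruncPoly K n)) : Set (TruncPoly K n)) = ⊤ ∧
    ¬ ((Ideal.span {truncX K n} ^ i).restrictScalars K ≤ Submodule.span K
        ((fun j : ℕ => truncX K n ^ j) '' {j : ℕ | 1 ≤ j ∧ j ≤ n ∧ j ≠ i})) ∧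
    (∀ k : ℕ, i < k → (Ideal.span {truncX K n} ^ k).restrictScalars K ≤ Submodule.span K
        ((fun j : ℕ => truncX K n ^ j) '' {j : ℕ | 1 ≤ j ∧ j ≤ n ∧ j ≠ i})) ∧
    ((∃ F : Finset (TruncPoly K n), ∀ z : TruncPoly K n,
        z ∈ Ideal.span {truncX K n} → z ≠ 0 →
        z ^ i ∈ Submodule.span K
          ((fun j : ℕ => truncX K n ^ j) '' {j : ℕ | 1 ≤ j ∧ j ≤ n ∧ j ≠ i}) →
        ∃ w ∈ F, ∃ u ∈ Submodule.span K
            ((fun j : ℕ => truncX K n ^ j) '' {j : ℕ | 1 ≤ j ∧ j ≤ n ∧ j ≠ i}),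
          ∃ lam : K, lam ≠ 0 ∧ expn K u * z = lam • w)
      ↔ (i = n - 1 ∨ i = n)) := by
  have mem_pow_iff {k : ℕ} {z : TruncPoly K n} :
      z ∈ (Ideal.span {truncX K n} ^ k).restrictScalars K ↔ truncX K n ^ k ∣ z := by
    rw [Submodule.restrictScalars_mem, Ideal.span_singleton_pow, Ideal.mem_span_singleton]
  refine ⟨fun z ↦ (TruncPoly.isUnit_or_truncX_dvd z).imp_right Ideal.mem_span_singleton.mpr,
    TruncPoly.gapSubspace_le, TruncPoly.finrank_gapSubspace hi1.le hin,
    TruncPoly.adjoin_gapSubspace (by omega) hi1.ne', fun hle ↦ ?_,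
    fun k hk z hz ↦ TruncPoly.mem_gapSubspace_of_truncX_pow_dvd hk (mem_pow_iff.mp hz),
    fun hF ↦ ?_, fun h ↦ TruncPoly.hasFiniteBoundaryClasses (by omega) hin⟩
  · have hxi : truncX K n ^ i ∈ TruncPoly.gapSubspace K n i := hle (mem_pow_iff.mpr dvd_rfl)
    rw [← one_smul K (truncX K n ^ i), TruncPoly.smul_truncX_pow_mem_gapSubspace_iff hin] at hxi
    exact one_ne_zero hxi
  · have := TruncPoly.le_of_hasFiniteBoundaryClasses hi1.le hF
    omega

set_option synthInstance.maxHeartbeats 1000000 in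
set_option maxHeartbeats 2000000 in
/-- Let `n ≥ 2`, `A = K[x]/(x^{n+1})` with maximal ideal `m = (x)`, and
for `1 < i ≤ n` let `U_i = span{x, …, x^{i−1}, x^{i+1}, …, x^n}`; then `(A, U_i)` is an
`H`-pair of degree `i`.  The boundary set `B = {z ∈ m : z ≠ 0, z^i ∈ U_i}` has only
finitely many `U_i`-equivalence classes if and only if `i = n−1` or `i = n`. -/
theorem stmt_12 (K : Type*) [Field K] [IsAlgClosed K] [CharZero K]
    (n : ℕ) (hn : 2 ≤ n) (i : ℕ) (hi1 : 1 < i) (hin : i ≤ n) :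
    (∀ z : TruncPoly K n, IsUnit z ∨ z ∈ Ideal.span {truncX K n}) ∧
    (Submodule.span K ((fun j : ℕ => truncX K n ^ j) '' {j : ℕ | 1 ≤ j ∧ j ≤ n ∧ j ≠ i})
        ≤ (Ideal.span {truncX K n}).restrictScalars K) ∧
    Module.finrank K (Submodule.span K
        ((fun j : ℕ => truncX K n ^ j) '' {j : ℕ | 1 ≤ j ∧ j ≤ n ∧ j ≠ i})) = n - 1 ∧
    Algebra.adjoin K ((Submodule.span K
        ((fun j : ℕ => truncX K n ^ j) '' {j : ℕ | 1 ≤ j ∧ j ≤ n ∧ j ≠ i}) :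
          Submodule K (TruncPoly K n)) : Set (TruncPoly K n)) = ⊤ ∧
    ¬ ((Ideal.span {truncX K n} ^ i).restrictScalars K ≤ Submodule.span K
        ((fun j : ℕ => truncX K n ^ j) '' {j : ℕ | 1 ≤ j ∧ j ≤ n ∧ j ≠ i})) ∧
    (∀ k : ℕ, i < k → (Ideal.span {truncX K n} ^ k).restrictScalars K ≤ Submodule.span K
        ((fun j : ℕ => truncX K n ^ j) '' {j : ℕ | 1 ≤ j ∧ j ≤ n ∧ j ≠ i})) ∧
    ((∃ F : Finset (TruncPoly K n), ∀ z : TruncPoly K n,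
        z ∈ Ideal.span {truncX K n} → z ≠ 0 →
        z ^ i ∈ Submodule.span K
          ((fun j : ℕ => truncX K n ^ j) '' {j : ℕ | 1 ≤ j ∧ j ≤ n ∧ j ≠ i}) →
        ∃ w ∈ F, ∃ u ∈ Submodule.span K
            ((fun j : ℕ => truncX K n ^ j) '' {j : ℕ | 1 ≤ j ∧ j ≤ n ∧ j ≠ i}),
          ∃ lam : K, lam ≠ 0 ∧ expn K u * z = lam • w)
      ↔ (i = n - 1 ∨ i = n)) :=
  stmt_12_general K n i hi1 hin
end

section
/- Let A = K[x,y]/(x², y²) with maximal ideal m = (x, y), and let W = span_K{x, y}; then (A, W) is an H-pair of degree 2, with boundary set B = {z ∈ m : z ≠ 0 and z² ∈ W}. Every element of B is W-equivalent to exactly one of the three elements x, y, xy; in particular B has exactly three W-equivalence classes. -/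
/-- The algebra `K[x,y]/(x², y²)`. -/
abbrev SqZero (K : Type*) [Field K] : Type _ :=
  MvPolynomial (Fin 2) K ⧸ Ideal.span
    {(MvPolynomial.X 0 : MvPolynomial (Fin 2) K) ^ 2,
      (MvPolynomial.X 1 : MvPolynomial (Fin 2) K) ^ 2}

/-- The image of `x` in `K[x,y]/(x², y²)`. -/
noncomputable abbrev sqX (K : Type*) [Field K] : SqZero K :=
  Ideal.Quotient.mk _ (MvPolynomial.X 0)

/-- The image of `y` in `K[x,y]/(x², y²)`. -/
noncomputable abbrev sqY (K : Type*) [Field K] : SqZero K :=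
  Ideal.Quotient.mk _ (MvPolynomial.X 1)

/-!
Every element of `A` is uniquely `a + b x + c y + d xy`; the maximal ideal is `a = 0`, its cube
vanishes, and `W` is `a = d = 0`. For `u = p x + q y` one has `u³ = 0`, so
`exp u = 1 + u + pq xy` and `exp u · (b x + c y + d xy) = b x + c y + (d + pc + qb) xy`:
the action keeps `(b, c)` and can shift `d` arbitrarily as soon as `(b, c) ≠ 0`. The boundary
condition `z² = 2bc xy ∈ W` forces `bc = 0`, so `z` is equivalent to `x` if `b ≠ 0`, to `y` if
`c ≠ 0`, and to `xy` otherwise; the line through `(b, c)` is an invariant, which separates the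
three classes.
-/

section expn

variable {K : Type*} [Field K] {A : Type*} [CommRing A] [Algebra K A]

lemma expn_eq_sum_range_of_pow_eq_zero {a : A} {n : ℕ} (hn : n ≤ Module.finrank K A + 1)
    (ha : a ^ n = 0) : expn K a = ∑ i ∈ Finset.range n, ((i.factorial : K)⁻¹) • a ^ i := by
  refine (Finset.sum_subset (Finset.range_subset_range.2 hn) fun i _ hi => ?_).symm
  rw [pow_eq_zero_of_le (by simpa using hi) ha, smul_zero]

lemma expn_eq_of_pow_three_eq_zero [CharZero K] {a : A} (hA : 2 ≤ Module.finrank K A)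
    (ha : a ^ 3 = 0) : expn K a = 1 + a + (2 : K)⁻¹ • a ^ 2 := by
  rw [expn_eq_sum_range_of_pow_eq_zero (by omega) ha]
  simp [Finset.sum_range_succ]

end expn

namespace SqZero

variable {K : Type*} [Field K]

open TrivSqZeroExt

/-- Sends `x ↦ ε₁`, `y ↦ ε₂` in `K[ε₁][ε₂]`, where `a + b x + c y + d xy` lands on the element
with the four coordinates `a, b, c, d`. -/
noncomputable def toDualNumber : SqZero K →ₐ[K] DualNumber (DualNumber K) :=
  Ideal.Quotient.liftₐ _
    (MvPolynomial.aeval (R := K) (S₁ := DualNumber (DualNumber K))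
      ![inl DualNumber.eps, DualNumber.eps]) <| by
    intro p hp
    rw [← RingHom.mem_ker]
    refine (Ideal.span_le.2 ?_) hp
    rintro _ (rfl | rfl) <;> simp [pow_two, inl_mul_inl]

@[simp] lemma toDualNumber_sqX : toDualNumber (sqX K) = inl DualNumber.eps :=
  MvPolynomial.aeval_X _ 0

@[simp] lemma toDualNumber_sqY : toDualNumber (sqY K) = DualNumber.eps :=
  MvPolynomial.aeval_X _ 1

noncomputable def mk (a b c d : K) : SqZero K :=
  a • 1 + b • sqX K + c • sqY K + d • (sqX K * sqY K)

lemma mk_inj {a b c d a' b' c' d' : K} :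
    mk a b c d = mk a' b' c' d' ↔ a = a' ∧ b = b' ∧ c = c' ∧ d = d' := by
  refine ⟨fun h => ?_, by rintro ⟨rfl, rfl, rfl, rfl⟩; rfl⟩
  have h' := congrArg (fun z => (((toDualNumber z).fst.fst, (toDualNumber z).fst.snd),
    ((toDualNumber z).snd.fst, (toDualNumber z).snd.snd))) h
  simpa [mk, and_assoc] using h'

lemma sqX_mul_sqX : sqX K * sqX K = 0 := by
  rw [← pow_two, ← map_pow, Ideal.Quotient.eq_zero_iff_mem]
  exact Ideal.subset_span (by simp)

lemma sqY_mul_sqY : sqY K * sqY K = 0 := by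
  rw [← pow_two, ← map_pow, Ideal.Quotient.eq_zero_iff_mem]
  exact Ideal.subset_span (by simp)

lemma mk_add (a b c d a' b' c' d' : K) :
    mk a b c d + mk a' b' c' d' = mk (a + a') (b + b') (c + c') (d + d') := by
  simp only [mk, add_smul]
  abel

lemma smul_mk (k a b c d : K) : k • mk a b c d = mk (k * a) (k * b) (k * c) (k * d) := by
  simp only [mk, smul_add, smul_smul]

lemma mk_mul (a b c d a' b' c' d' : K) :
    mk a b c d * mk a' b' c' d'
      = mk (a * a') (a * b' + b * a') (a * c' + c * a') (a * d' + b * c' + c * b' + d * a') := by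
  have hyx : sqY K * sqX K = sqX K * sqY K := mul_comm _ _
  have hxxy : sqX K * (sqX K * sqY K) = 0 := by rw [← mul_assoc, sqX_mul_sqX, zero_mul]
  have hyxy : sqY K * (sqX K * sqY K) = 0 := by rw [mul_left_comm, sqY_mul_sqY, mul_zero]
  have hxyx : sqX K * sqY K * sqX K = 0 := by rw [mul_comm, hxxy]
  have hxyy : sqX K * sqY K * sqY K = 0 := by rw [mul_assoc, sqY_mul_sqY, mul_zero]
  have hxyxy : sqX K * sqY K * (sqX K * sqY K) = 0 := by rw [mul_assoc, hyxy, mul_zero]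
  simp only [mk, add_mul, mul_add, smul_mul_assoc, mul_smul_comm, smul_smul, one_mul, mul_one,
    sqX_mul_sqX, sqY_mul_sqY, hyx, hxxy, hyxy, hxyx, hxyy, hxyxy, smul_zero, add_zero]
  module

lemma one_eq_mk : (1 : SqZero K) = mk 1 0 0 0 := by simp [mk]
lemma sqX_eq_mk : sqX K = mk 0 1 0 0 := by simp [mk]
lemma sqY_eq_mk : sqY K = mk 0 0 1 0 := by simp [mk]
lemma sqX_mul_sqY_eq_mk : sqX K * sqY K = mk 0 0 0 1 := by simp [mk]
lemma zero_eq_mk : (0 : SqZero K) = mk 0 0 0 0 := by simp [mk]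

lemma adjoin_sqX_sqY : Algebra.adjoin K {sqX K, sqY K} = ⊤ := by
  have hxy : ({sqX K, sqY K} : Set (SqZero K)) =
      Ideal.Quotient.mkₐ K _ '' Set.range MvPolynomial.X := by
    rw [← Set.range_comp, ← Matrix.range_cons_cons_empty _ _ ![]]
    congr 1
    ext i
    fin_cases i <;> rfl
  rw [hxy, Algebra.adjoin_image, MvPolynomial.adjoin_range_X, Algebra.map_top,
    AlgHom.range_eq_top]
  exact Ideal.Quotient.mkₐ_surjective K _

lemma exists_eq_mk (z : SqZero K) : ∃ a b c d : K, z = mk a b c d := by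
  induction (adjoin_sqX_sqY (K := K)).ge (Set.mem_univ z) using Algebra.adjoin_induction with
  | mem z hz =>
    rcases hz with rfl | rfl
    exacts [⟨0, 1, 0, 0, sqX_eq_mk⟩, ⟨0, 0, 1, 0, sqY_eq_mk⟩]
  | algebraMap r => exact ⟨r, 0, 0, 0, by simp [mk, Algebra.algebraMap_eq_smul_one]⟩
  | add z w _ _ hz hw =>
    obtain ⟨a, b, c, d, rfl⟩ := hz
    obtain ⟨a', b', c', d', rfl⟩ := hw
    exact ⟨_, _, _, _, mk_add ..⟩
  | mul z w _ _ hz hw =>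
    obtain ⟨a, b, c, d, rfl⟩ := hz
    obtain ⟨a', b', c', d', rfl⟩ := hw
    exact ⟨_, _, _, _, mk_mul ..⟩

lemma mk_mem_idealSpan_sqX_sqY_iff {a b c d : K} :
    mk a b c d ∈ Ideal.span {sqX K, sqY K} ↔ a = 0 := by
  rw [Ideal.mem_span_pair]
  constructor
  · rintro ⟨p, q, hpq⟩
    obtain ⟨ap, bp, cp, dp, rfl⟩ := exists_eq_mk p
    obtain ⟨aq, bq, cq, dq, rfl⟩ := exists_eq_mk q
    rw [sqX_eq_mk, sqY_eq_mk, mk_mul, mk_mul, mk_add, mk_inj] at hpq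
    simpa using hpq.1.symm
  · rintro rfl
    refine ⟨mk b 0 d 0, mk c 0 0 0, ?_⟩
    rw [sqX_eq_mk, sqY_eq_mk, mk_mul, mk_mul, mk_add, mk_inj]
    simp

lemma mk_mem_span_sqX_sqY_iff {a b c d : K} :
    mk a b c d ∈ Submodule.span K {sqX K, sqY K} ↔ a = 0 ∧ d = 0 := by
  rw [Submodule.mem_span_pair]
  constructor
  · rintro ⟨s, t, hst⟩
    rw [sqX_eq_mk, sqY_eq_mk, smul_mk, smul_mk, mk_add, mk_inj] at hst
    simp only [mul_zero, add_zero, mul_one, zero_add] at hst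
    exact ⟨hst.1.symm, hst.2.2.2.symm⟩
  · rintro ⟨rfl, rfl⟩
    refine ⟨b, c, ?_⟩
    rw [sqX_eq_mk, sqY_eq_mk, smul_mk, smul_mk, mk_add, mk_inj]
    simp

lemma isUnit_mk {a : K} (ha : a ≠ 0) (b c d : K) : IsUnit (mk a b c d) := by
  refine .of_mul_eq_one (mk a⁻¹ (-b / a ^ 2) (-c / a ^ 2) ((2 * b * c - a * d) / a ^ 3)) ?_
  rw [mk_mul, one_eq_mk, mk_inj]
  refine ⟨?_, ?_, ?_, ?_⟩ <;> field_simp <;> ring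

lemma mul_mul_eq_zero_of_mem {z₁ z₂ z₃ : SqZero K} (h₁ : z₁ ∈ Ideal.span {sqX K, sqY K})
    (h₂ : z₂ ∈ Ideal.span {sqX K, sqY K}) (h₃ : z₃ ∈ Ideal.span {sqX K, sqY K}) :
    z₁ * z₂ * z₃ = 0 := by
  obtain ⟨a₁, b₁, c₁, d₁, rfl⟩ := exists_eq_mk z₁
  obtain ⟨a₂, b₂, c₂, d₂, rfl⟩ := exists_eq_mk z₂
  obtain ⟨a₃, b₃, c₃, d₃, rfl⟩ := exists_eq_mk z₃
  obtain rfl := mk_mem_idealSpan_sqX_sqY_iff.1 h₁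
  obtain rfl := mk_mem_idealSpan_sqX_sqY_iff.1 h₂
  obtain rfl := mk_mem_idealSpan_sqX_sqY_iff.1 h₃
  rw [mk_mul, mk_mul, zero_eq_mk, mk_inj]
  simp

lemma idealSpan_sqX_sqY_pow_three : Ideal.span {sqX K, sqY K} ^ 3 = (⊥ : Ideal (SqZero K)) := by
  rw [eq_bot_iff, pow_three' (Ideal.span _), Ideal.mul_le]
  intro r hr s hs
  induction hr using Submodule.mul_induction_on' with
  | mem_mul_mem z hz w hw => exact Ideal.mem_bot.2 (mul_mul_eq_zero_of_mem hz hw hs)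
  | add z _ w _ hz hw => rw [add_mul]; exact add_mem hz hw

lemma isUnit_or_mem_idealSpan_sqX_sqY (z : SqZero K) :
    IsUnit z ∨ z ∈ Ideal.span {sqX K, sqY K} := by
  obtain ⟨a, b, c, d, rfl⟩ := exists_eq_mk z
  rcases eq_or_ne a 0 with rfl | ha
  exacts [.inr (mk_mem_idealSpan_sqX_sqY_iff.2 rfl), .inl (isUnit_mk ha b c d)]

lemma idealSpan_sqX_sqY_pow_eq_bot {k : ℕ} (hk : 3 ≤ k) :
    Ideal.span {sqX K, sqY K} ^ k = (⊥ : Ideal (SqZero K)) :=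
  eq_bot_mono (Ideal.pow_le_pow_right hk) idealSpan_sqX_sqY_pow_three

lemma sqX_mul_sqY_mem_idealSpan_sq : sqX K * sqY K ∈ Ideal.span {sqX K, sqY K} ^ 2 := by
  rw [pow_two (Ideal.span {sqX K, sqY K})]
  exact Ideal.mul_mem_mul (Ideal.subset_span (by simp)) (Ideal.subset_span (by simp))

lemma sqX_mul_sqY_notMem_span : sqX K * sqY K ∉ Submodule.span K {sqX K, sqY K} := by
  rw [sqX_mul_sqY_eq_mk, mk_mem_span_sqX_sqY_iff]
  exact fun h => one_ne_zero h.2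

lemma finrank_span_sqX_sqY : Module.finrank K (Submodule.span K {sqX K, sqY K}) = 2 := by
  have hli : LinearIndependent K ![sqX K, sqY K] := by
    refine LinearIndependent.pair_iff.2 fun s t hst => ?_
    rw [sqX_eq_mk, sqY_eq_mk, smul_mk, smul_mk, mk_add, zero_eq_mk, mk_inj] at hst
    simpa using hst
  rw [← Matrix.range_cons_cons_empty (sqX K) (sqY K) ![], finrank_span_eq_card hli,
    Fintype.card_fin]

lemma finrank_eq_four : Module.finrank K (SqZero K) = 4 := by
  have hli : LinearIndependent K ![1, sqX K, sqY K, sqX K * sqY K] := by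
    rw [Fintype.linearIndependent_iff]
    intro g hg
    have hg' : mk (g 0) (g 1) (g 2) (g 3) = mk 0 0 0 0 := by
      rw [← zero_eq_mk, ← hg, Fin.sum_univ_four]
      simp [mk]
    rw [mk_inj] at hg'
    intro i
    fin_cases i <;> simp [hg']
  have hsp : ⊤ ≤ Submodule.span K (Set.range ![1, sqX K, sqY K, sqX K * sqY K]) := by
    rintro z -
    obtain ⟨a, b, c, d, rfl⟩ := exists_eq_mk z
    exact (Submodule.mem_span_range_iff_exists_fun K).2
      ⟨![a, b, c, d], by simp [Fin.sum_univ_four, mk]⟩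
  simp [Module.finrank_eq_card_basis (Module.Basis.mk hli hsp)]

lemma mk_zero_sq (p q r : K) : mk 0 p q r ^ 2 = mk 0 0 0 (2 * p * q) := by
  rw [pow_two, mk_mul, mk_inj]
  refine ⟨?_, ?_, ?_, ?_⟩ <;> ring

lemma expn_mk [CharZero K] (p q r : K) : expn K (mk 0 p q r) = mk 1 p q (r + p * q) := by
  have hsq := mk_zero_sq p q r
  have hcube : mk 0 p q r ^ 3 = 0 := by
    rw [pow_succ, hsq, mk_mul, zero_eq_mk, mk_inj]
    simp
  rw [expn_eq_of_pow_three_eq_zero (by rw [finrank_eq_four]; norm_num) hcube, hsq, one_eq_mk,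
    smul_mk, mk_add, mk_add, mk_inj]
  refine ⟨?_, ?_, ?_, ?_⟩ <;> field_simp <;> ring

def WEquiv (z w : SqZero K) : Prop :=
  ∃ u ∈ Submodule.span K {sqX K, sqY K}, ∃ lam : K, lam ≠ 0 ∧ expn K u * z = lam • w

lemma wEquiv_mk_iff [CharZero K] {b c d : K} {w : SqZero K} :
    WEquiv (mk 0 b c d) w ↔ ∃ p q lam : K, lam ≠ 0 ∧ mk 0 b c (d + p * c + q * b) = lam • w := by
  constructor
  · rintro ⟨u, hu, lam, hlam, h⟩
    obtain ⟨a', p, q, r, rfl⟩ := exists_eq_mk u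
    obtain ⟨rfl, rfl⟩ := mk_mem_span_sqX_sqY_iff.1 hu
    refine ⟨p, q, lam, hlam, ?_⟩
    rw [← h, expn_mk, mk_mul, mk_inj]
    refine ⟨?_, ?_, ?_, ?_⟩ <;> ring
  · rintro ⟨p, q, lam, hlam, h⟩
    refine ⟨mk 0 p q 0, mk_mem_span_sqX_sqY_iff.2 ⟨rfl, rfl⟩, lam, hlam, ?_⟩
    rw [← h, expn_mk, mk_mul, mk_inj]
    refine ⟨?_, ?_, ?_, ?_⟩ <;> ring

lemma wEquiv_sqX_iff [CharZero K] {b c d : K} : WEquiv (mk 0 b c d) (sqX K) ↔ b ≠ 0 ∧ c = 0 := by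
  simp only [wEquiv_mk_iff, sqX_eq_mk, smul_mk, mk_inj, mul_zero, mul_one, true_and]
  constructor
  · rintro ⟨p, q, lam, hlam, rfl, rfl, -⟩
    exact ⟨hlam, rfl⟩
  · rintro ⟨hb, rfl⟩
    exact ⟨0, -d / b, b, hb, rfl, rfl, by field_simp; ring⟩

lemma wEquiv_sqY_iff [CharZero K] {b c d : K} : WEquiv (mk 0 b c d) (sqY K) ↔ b = 0 ∧ c ≠ 0 := by
  simp only [wEquiv_mk_iff, sqY_eq_mk, smul_mk, mk_inj, mul_zero, mul_one, true_and]
  constructor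
  · rintro ⟨p, q, lam, hlam, rfl, rfl, -⟩
    exact ⟨rfl, hlam⟩
  · rintro ⟨rfl, hc⟩
    exact ⟨-d / c, 0, c, hc, rfl, rfl, by field_simp; ring⟩

lemma wEquiv_sqX_mul_sqY_iff [CharZero K] {b c d : K} :
    WEquiv (mk 0 b c d) (sqX K * sqY K) ↔ b = 0 ∧ c = 0 ∧ d ≠ 0 := by
  simp only [wEquiv_mk_iff, sqX_mul_sqY_eq_mk, smul_mk, mk_inj, mul_zero, mul_one, true_and]
  constructor
  · rintro ⟨p, q, lam, hlam, rfl, rfl, h⟩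
    simpa [← h] using hlam
  · rintro ⟨rfl, rfl, hd⟩
    exact ⟨0, 0, d, hd, rfl, rfl, by ring⟩

lemma existsUnique_wEquiv [CharZero K] {z : SqZero K} (hz : z ∈ Ideal.span {sqX K, sqY K})
    (hz₀ : z ≠ 0) (hz₂ : z ^ 2 ∈ Submodule.span K {sqX K, sqY K}) :
    ∃! w, w ∈ ({sqX K, sqY K, sqX K * sqY K} : Set (SqZero K)) ∧ WEquiv z w := by
  obtain ⟨a, b, c, d, rfl⟩ := exists_eq_mk z
  obtain rfl := mk_mem_idealSpan_sqX_sqY_iff.1 hz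
  have hbc : b * c = 0 := by
    rw [mk_zero_sq, mk_mem_span_sqX_sqY_iff, mul_assoc] at hz₂
    exact (mul_eq_zero.1 hz₂.2).resolve_left two_ne_zero
  refine existsUnique_of_exists_of_unique ?_ ?_
  · rcases eq_or_ne b 0 with rfl | hb
    · rcases eq_or_ne c 0 with rfl | hc
      · have hd : d ≠ 0 := by rintro rfl; exact hz₀ zero_eq_mk.symm
        exact ⟨_, by simp, wEquiv_sqX_mul_sqY_iff.2 ⟨rfl, rfl, hd⟩⟩
      · exact ⟨_, by simp, wEquiv_sqY_iff.2 ⟨rfl, hc⟩⟩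
    · exact ⟨_, by simp, wEquiv_sqX_iff.2 ⟨hb, (mul_eq_zero.1 hbc).resolve_left hb⟩⟩
  · rintro w₁ w₂ ⟨h₁ | h₁ | h₁, e₁⟩ ⟨h₂ | h₂ | h₂, e₂⟩ <;> subst h₁ h₂ <;>
      simp_all [wEquiv_sqX_iff, wEquiv_sqY_iff, wEquiv_sqX_mul_sqY_iff]

end SqZero

open SqZero in
theorem stmt_13_general (K : Type*) [Field K] [CharZero K] :
    (∀ z : SqZero K, IsUnit z ∨ z ∈ Ideal.span {sqX K, sqY K}) ∧
    (Submodule.span K {sqX K, sqY K} ≤ (Ideal.span {sqX K, sqY K}).restrictScalars K) ∧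
    Module.finrank K (Submodule.span K {sqX K, sqY K}) = 2 ∧
    Algebra.adjoin K ((Submodule.span K {sqX K, sqY K} :
        Submodule K (SqZero K)) : Set (SqZero K)) = ⊤ ∧
    ¬ ((Ideal.span {sqX K, sqY K} ^ 2).restrictScalars K ≤ Submodule.span K {sqX K, sqY K}) ∧
    (∀ k : ℕ, 2 < k → (Ideal.span {sqX K, sqY K} ^ k).restrictScalars K
        ≤ Submodule.span K {sqX K, sqY K}) ∧
    (∀ z : SqZero K, z ∈ Ideal.span {sqX K, sqY K} → z ≠ 0 →
        z ^ 2 ∈ Submodule.span K {sqX K, sqY K} →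
        ∃! w : SqZero K, w ∈ ({sqX K, sqY K, sqX K * sqY K} : Set (SqZero K)) ∧
          ∃ u ∈ Submodule.span K {sqX K, sqY K},
            ∃ lam : K, lam ≠ 0 ∧ expn K u * z = lam • w) := by
  refine ⟨isUnit_or_mem_idealSpan_sqX_sqY, Submodule.span_le.2 Ideal.subset_span,
    finrank_span_sqX_sqY, ?_, fun h => sqX_mul_sqY_notMem_span (h sqX_mul_sqY_mem_idealSpan_sq),
    fun k hk => ?_, fun z hz hz₀ hz₂ => existsUnique_wEquiv hz hz₀ hz₂⟩
  · exact eq_top_mono (Algebra.adjoin_mono Submodule.subset_span) adjoin_sqX_sqY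
  · rw [idealSpan_sqX_sqY_pow_eq_bot hk, Submodule.restrictScalars_bot]
    exact bot_le

set_option synthInstance.maxHeartbeats 1000000 in
set_option maxHeartbeats 2000000 in
/-- Let `A = K[x,y]/(x², y²)` with maximal ideal `m = (x, y)`, and let
`W = span{x, y}`; then `(A, W)` is an `H`-pair of degree 2, with boundary set
`B = {z ∈ m : z ≠ 0, z² ∈ W}`.  Every element of `B` is `W`-equivalent to exactly one of
the three elements `x, y, xy`; in particular `B` has exactly three `W`-equivalence
classes. -/
theorem stmt_13 (K : Type*) [Field K] [IsAlgClosed K] [CharZero K] :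
    (∀ z : SqZero K, IsUnit z ∨ z ∈ Ideal.span {sqX K, sqY K}) ∧
    (Submodule.span K {sqX K, sqY K} ≤ (Ideal.span {sqX K, sqY K}).restrictScalars K) ∧
    Module.finrank K (Submodule.span K {sqX K, sqY K}) = 2 ∧
    Algebra.adjoin K ((Submodule.span K {sqX K, sqY K} :
        Submodule K (SqZero K)) : Set (SqZero K)) = ⊤ ∧
    ¬ ((Ideal.span {sqX K, sqY K} ^ 2).restrictScalars K ≤ Submodule.span K {sqX K, sqY K}) ∧
    (∀ k : ℕ, 2 < k → (Ideal.span {sqX K, sqY K} ^ k).restrictScalars K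
        ≤ Submodule.span K {sqX K, sqY K}) ∧
    (∀ z : SqZero K, z ∈ Ideal.span {sqX K, sqY K} → z ≠ 0 →
        z ^ 2 ∈ Submodule.span K {sqX K, sqY K} →
        ∃! w : SqZero K, w ∈ ({sqX K, sqY K, sqX K * sqY K} : Set (SqZero K)) ∧
          ∃ u ∈ Submodule.span K {sqX K, sqY K},
            ∃ lam : K, lam ≠ 0 ∧ expn K u * z = lam • w) :=
  stmt_13_general K
end

section
/- Let n ≥ 2 and A = K[x]/(x^{n+1}). Let s = α₁x + α₂x² + … + α_{n−1}x^{n−1} ∈ A with α₁ ≠ 0, and for t ∈ K write exp(t·s) = g₀(t) + g₁(t)x + … + g_n(t)x^n, so that each coefficient g_i is given by a polynomial in t. Then deg g_i = i for every 0 ≤ i ≤ n, and for every homogeneous polynomial F ∈ K[z₀, z₁, …, z_n] satisfying F(g₀(t), g₁(t), …, g_n(t)) = 0 for all t ∈ K, one has F(0, 0, …, 0, 1) = 0. -/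
/-!
Since `s` has no constant term and linear coefficient `α₁`, the coefficient of `x ^ i` in
`(t s) ^ k / k!` vanishes for `k > i` and equals `(α₁ t) ^ i / i!` for `k = i`; so `g_i` has
degree exactly `i`. For `F` homogeneous of degree `d`, every monomial of `F(g₀, …, g_n)` other
than `z_n ^ d` then has `t`-degree `< d n`, so the coefficient of `t ^ (d n)` in the polynomial
`F(g₀, …, g_n)`, which vanishes since `K` is infinite, is the coefficient of `z_n ^ d` in `F`
times a nonzero constant. By homogeneity that coefficient is `F(0, …, 0, 1)`.
-/

open Polynomial
open scoped Nat

namespace Finsupp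

variable {σ : Type*}

lemma exists_mem_support_ne_of_degree_eq {m : σ →₀ ℕ} {d : ℕ} {j : σ}
    (hm : m.degree = d) (hne : m ≠ single j d) : ∃ i ∈ m.support, i ≠ j := by
  by_contra! h
  have hsub : m = single j (m j) := support_subset_singleton.mp fun i hi => by
    simpa using h i hi
  rw [hsub, degree_single] at hm
  exact hne (hm ▸ hsub)

end Finsupp

namespace Polynomial

variable {R : Type*} [CommSemiring R] {S : R[X]}

lemma coeff_pow_eq_zero_of_lt (hS : S.coeff 0 = 0) {i k : ℕ} (hik : i < k) :
    (S ^ k).coeff i = 0 :=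
  X_pow_dvd_iff.mp (pow_dvd_pow_of_dvd (X_dvd_iff.mpr hS) k) i hik

lemma coeff_pow_self_of_coeff_zero_eq_zero (hS : S.coeff 0 = 0) (k : ℕ) :
    (S ^ k).coeff k = S.coeff 1 ^ k := by
  have hX : S = S.divX * X := by simpa [hS] using (divX_mul_X_add S).symm
  calc (S ^ k).coeff k = (S.divX ^ k * X ^ k).coeff (0 + k) := by rw [zero_add, ← mul_pow, ← hX]
    _ = S.coeff 1 ^ k := by
      rw [coeff_mul_X_pow, coeff_zero_eq_eval_zero, eval_pow, ← coeff_zero_eq_eval_zero,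
        coeff_divX, zero_add]

lemma natDegree_finsuppProd_pow_lt {σ : Type*} {g : σ → R[X]} {j : σ}
    (hg : ∀ i ≠ j, (g i).natDegree < (g j).natDegree) {m : σ →₀ ℕ} {d : ℕ}
    (hm : m.degree = d) (hne : m ≠ Finsupp.single j d) :
    (m.prod fun i k => g i ^ k).natDegree < d * (g j).natDegree := by
  obtain ⟨i₀, hi₀, hi₀j⟩ := Finsupp.exists_mem_support_ne_of_degree_eq hm hne
  calc (m.prod fun i k => g i ^ k).natDegree
      ≤ ∑ i ∈ m.support, m i * (g i).natDegree :=
        (natDegree_prod_le ..).trans (Finset.sum_le_sum fun i _ => natDegree_pow_le)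
    _ < ∑ i ∈ m.support, m i * (g j).natDegree := by
        refine Finset.sum_lt_sum (fun i _ => Nat.mul_le_mul_left _ ?_) ⟨i₀, hi₀, ?_⟩
        · rcases eq_or_ne i j with rfl | hij
          exacts [le_rfl, (hg i hij).le]
        · exact Nat.mul_lt_mul_of_pos_left (hg i₀ hi₀j) (Nat.pos_of_ne_zero
            (Finsupp.mem_support_iff.mp hi₀))
    _ = d * (g j).natDegree := by rw [← Finset.sum_mul, ← hm, Finsupp.degree_apply]

lemma eval_mvPolynomial_aeval {σ R : Type*} [CommRing R] (g : σ → R[X])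
    (F : MvPolynomial σ R) (t : R) :
    (MvPolynomial.aeval g F).eval t = MvPolynomial.eval (fun i => (g i).eval t) F := by
  simpa [coe_aeval_eq_eval, MvPolynomial.aeval_eq_eval] using
    DFunLike.congr_fun (MvPolynomial.comp_aeval (R := R) g (Polynomial.aeval t)) F

end Polynomial

namespace MvPolynomial

variable {σ R : Type*} {d : ℕ}

lemma IsHomogeneous.eval_pi_single_one [DecidableEq σ] [CommSemiring R] {F : MvPolynomial σ R}
    (hF : F.IsHomogeneous d) (j : σ) :
    eval (Pi.single j 1) F = F.coeff (Finsupp.single j d) := by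
  rw [eval_eq, Finset.sum_eq_single (Finsupp.single j d)]
  · rcases eq_or_ne d 0 with rfl | hd <;> simp [*]
  · intro m hm hne
    obtain ⟨i₀, hi₀, hi₀j⟩ := Finsupp.exists_mem_support_ne_of_degree_eq
      (hF.degree_eq_sum_deg_support hm).symm hne
    rw [Finset.prod_eq_zero hi₀ (by simp [hi₀j, Finsupp.mem_support_iff.mp hi₀]), mul_zero]
  · intro h
    rw [notMem_support_iff.mp h, zero_mul]

lemma IsHomogeneous.coeff_single_eq_zero_of_aeval_eq_zero [CommRing R] [IsDomain R]
    {F : MvPolynomial σ R} (hF : F.IsHomogeneous d) {g : σ → R[X]} {j : σ} (hgj : g j ≠ 0)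
    (hg : ∀ i ≠ j, (g i).natDegree < (g j).natDegree) (hFg : MvPolynomial.aeval g F = 0) :
    F.coeff (Finsupp.single j d) = 0 := by
  have htop : (MvPolynomial.aeval g F).coeff (d * (g j).natDegree)
      = F.coeff (Finsupp.single j d) * (g j).leadingCoeff ^ d := by
    conv_lhs => rw [F.as_sum, map_sum, finsetSum_coeff]
    rw [Finset.sum_eq_single (Finsupp.single j d)]
    · rw [aeval_monomial, Polynomial.algebraMap_eq, Polynomial.coeff_C_mul,
        Finsupp.prod_single_index (h := fun i k => g i ^ k) (pow_zero (g j)),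
        coeff_pow_mul_natDegree]
    · intro m hm hne
      rw [aeval_monomial, Polynomial.algebraMap_eq, Polynomial.coeff_C_mul,
        coeff_eq_zero_of_natDegree_lt
          (natDegree_finsuppProd_pow_lt hg (hF.degree_eq_sum_deg_support hm).symm hne), mul_zero]
    · intro h
      rw [notMem_support_iff.mp h, monomial_zero, map_zero, Polynomial.coeff_zero]
  rw [hFg, Polynomial.coeff_zero, eq_comm] at htop
  exact (mul_eq_zero.mp htop).resolve_right (pow_ne_zero _ (leadingCoeff_ne_zero.mpr hgj))

end MvPolynomial

section TruncPoly

variable {K : Type*} [Field K] {n : ℕ}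

noncomputable abbrev truncMk (K : Type*) [Field K] (n : ℕ) : K[X] →ₐ[K] TruncPoly K n :=
  Ideal.Quotient.mkₐ K _

lemma truncMk_X : truncMk K n X = truncX K n := rfl

lemma truncMk_eq_truncMk_iff {P Q : K[X]} :
    truncMk K n P = truncMk K n Q ↔ ∀ i ≤ n, P.coeff i = Q.coeff i := by
  rw [Ideal.Quotient.mkₐ_eq_mk, Ideal.Quotient.eq, Ideal.mem_span_singleton, X_pow_dvd_iff]
  simp only [coeff_sub, sub_eq_zero, Nat.lt_succ_iff]

lemma coeff_sum_fin_smul_X_pow (c : Fin (n + 1) → K) (j : Fin (n + 1)) :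
    (∑ i, c i • X ^ (i : ℕ) : K[X]).coeff j = c j := by
  simp [finsetSum_coeff, coeff_X_pow, Fin.val_inj]

lemma coeff_eq_of_truncMk_eq_sum {P : K[X]} {c : Fin (n + 1) → K}
    (h : truncMk K n P = ∑ i, c i • truncX K n ^ (i : ℕ)) (i : Fin (n + 1)) :
    P.coeff i = c i := by
  have hc : ∑ i, c i • truncX K n ^ (i : ℕ) = truncMk K n (∑ i, c i • X ^ (i : ℕ)) := by
    simp [map_sum, map_smul, map_pow, truncMk_X]
  rw [hc, truncMk_eq_truncMk_iff] at h
  rw [h i (Nat.lt_succ_iff.mp i.isLt), coeff_sum_fin_smul_X_pow]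

lemma finrank_truncPoly : Module.finrank K (TruncPoly K n) = n + 1 := by
  have h := (AdjoinRoot.powerBasis (pow_ne_zero (n + 1) (X_ne_zero (R := K)))).finrank
  rwa [AdjoinRoot.powerBasis_dim, natDegree_X_pow] at h

lemma expn_smul_truncMk (P : K[X]) (t : K) :
    expn K (t • truncMk K n P)
      = truncMk K n (∑ k ∈ Finset.range (n + 2), (k ! : K)⁻¹ • (t • P) ^ k) := by
  simp [expn, finrank_truncPoly, map_sum, map_smul, map_pow]

end TruncPoly

section ExpCoeff

variable {K : Type*} [Field K]

/-- The coefficient of `x ^ i` in `∑_{k ≤ N} (t • S) ^ k / k!`, as a polynomial in `t`. -/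
noncomputable def expCoeff (S : K[X]) (N i : ℕ) : K[X] :=
  ∑ k ∈ Finset.range (N + 1), monomial k ((k ! : K)⁻¹ * (S ^ k).coeff i)

variable {S : K[X]} {N i : ℕ}

lemma eval_expCoeff (t : K) :
    (expCoeff S N i).eval t
      = (∑ k ∈ Finset.range (N + 1), (k ! : K)⁻¹ • (t • S) ^ k).coeff i := by
  simp only [expCoeff, eval_finsetSum, eval_monomial, finsetSum_coeff, _root_.smul_pow,
    smul_smul, coeff_smul, smul_eq_mul]
  exact Finset.sum_congr rfl fun k _ => by ring

lemma coeff_expCoeff (m : ℕ) :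
    (expCoeff S N i).coeff m = if m ≤ N then (m ! : K)⁻¹ * (S ^ m).coeff i else 0 := by
  simp only [expCoeff, finsetSum_coeff, coeff_monomial, Finset.sum_ite_eq', Finset.mem_range,
    Nat.lt_succ_iff]

lemma degree_expCoeff [CharZero K] (h0 : S.coeff 0 = 0) (h1 : S.coeff 1 ≠ 0) (hi : i ≤ N) :
    (expCoeff S N i).degree = i := by
  refine degree_eq_of_le_of_coeff_ne_zero ((degree_le_iff_coeff_zero _ _).mpr fun m hm => ?_) ?_
  · rw [coeff_expCoeff, coeff_pow_eq_zero_of_lt h0 (by exact_mod_cast hm)]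
    simp
  · rw [coeff_expCoeff, if_pos hi, coeff_pow_self_of_coeff_zero_eq_zero h0]
    simp [h1, Nat.factorial_ne_zero]

end ExpCoeff

theorem stmt_18_general (K : Type*) [Field K] [CharZero K]
    (n : ℕ) (hn : 2 ≤ n) (α : ℕ → K) (hα : α 1 ≠ 0) :
    ∀ g : Fin (n + 1) → Polynomial K,
      (∀ t : K,
        expn K (t • ∑ j ∈ Finset.Icc 1 (n - 1), α j • truncX K n ^ j)
          = ∑ i : Fin (n + 1), (g i).eval t • truncX K n ^ (i : ℕ)) →
      ((∀ i : Fin (n + 1), (g i).degree = ((i : ℕ) : WithBot ℕ)) ∧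
       ∀ dF : ℕ, ∀ F : MvPolynomial (Fin (n + 1)) K, F.IsHomogeneous dF →
         (∀ t : K, MvPolynomial.eval (fun i => (g i).eval t) F = 0) →
         MvPolynomial.eval (fun i : Fin (n + 1) => if i = Fin.last n then (1 : K) else 0) F
           = 0) := by
  intro g hg
  set S : K[X] := ∑ j ∈ Finset.Icc 1 (n - 1), α j • X ^ j
  have hS0 : S.coeff 0 = 0 := by simp [S, finsetSum_coeff, coeff_X_pow]
  have hS1 : S.coeff 1 = α 1 := by
    simp only [S, finsetSum_coeff, coeff_smul, coeff_X_pow, smul_eq_mul, mul_ite, mul_one,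
      mul_zero, Finset.sum_ite_eq, Finset.mem_Icc]
    exact if_pos ⟨le_rfl, by omega⟩
  have hmkS : truncMk K n S = ∑ j ∈ Finset.Icc 1 (n - 1), α j • truncX K n ^ j := by
    simp [S, map_sum, map_smul, map_pow, truncMk_X]
  have hgS : ∀ i, g i = expCoeff S (n + 1) i := fun i => Polynomial.funext fun t => by
    have h := hg t
    rw [← hmkS, expn_smul_truncMk] at h
    rw [eval_expCoeff, coeff_eq_of_truncMk_eq_sum h]
  have hdeg : ∀ i : Fin (n + 1), (g i).degree = (i : ℕ) := fun i => by
    rw [hgS]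
    exact degree_expCoeff hS0 (hS1 ▸ hα) (by omega)
  refine ⟨hdeg, fun d F hF hFg => ?_⟩
  have hnat : ∀ i, (g i).natDegree = i := fun i => natDegree_eq_of_degree_eq_some (hdeg i)
  have hlast : g (Fin.last n) ≠ 0 :=
    ne_zero_of_degree_gt (n := 0) (by rw [hdeg]; exact_mod_cast (by omega : 0 < n))
  have haeval : MvPolynomial.aeval g F = 0 :=
    Polynomial.funext fun t => by rw [eval_mvPolynomial_aeval, hFg, eval_zero]
  have h := (hF.eval_pi_single_one (Fin.last n)).trans
    (hF.coeff_single_eq_zero_of_aeval_eq_zero hlast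
      (fun i hi => by simpa only [hnat, Fin.val_last] using Fin.val_lt_last hi) haeval)
  convert h using 3
  funext i
  rw [Pi.single_apply]

set_option synthInstance.maxHeartbeats 1000000 in
set_option maxHeartbeats 2000000 in
/-- Let `n ≥ 2` and `A = K[x]/(x^{n+1})`.  Let
`s = α₁x + α₂x² + … + α_{n−1}x^{n−1} ∈ A` with `α₁ ≠ 0`, and for `t ∈ K` write
`exp(t·s) = g₀(t) + g₁(t)x + … + g_n(t)x^n`, so that each coefficient `g_i` is given by a
polynomial in `t`.  Then `deg g_i = i` for every `0 ≤ i ≤ n`, and for every homogeneous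
polynomial `F ∈ K[z₀, …, z_n]` satisfying `F(g₀(t), …, g_n(t)) = 0` for all `t ∈ K`, one
has `F(0, 0, …, 0, 1) = 0`. -/
theorem stmt_18 (K : Type*) [Field K] [IsAlgClosed K] [CharZero K]
    (n : ℕ) (hn : 2 ≤ n) (α : ℕ → K) (hα : α 1 ≠ 0) :
    ∀ g : Fin (n + 1) → Polynomial K,
      (∀ t : K,
        expn K (t • ∑ j ∈ Finset.Icc 1 (n - 1), α j • truncX K n ^ j)
          = ∑ i : Fin (n + 1), (g i).eval t • truncX K n ^ (i : ℕ)) →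
      ((∀ i : Fin (n + 1), (g i).degree = ((i : ℕ) : WithBot ℕ)) ∧
       ∀ dF : ℕ, ∀ F : MvPolynomial (Fin (n + 1)) K, F.IsHomogeneous dF →
         (∀ t : K, MvPolynomial.eval (fun i => (g i).eval t) F = 0) →
         MvPolynomial.eval (fun i : Fin (n + 1) => if i = Fin.last n then (1 : K) else 0) F
           = 0) :=
  stmt_18_general K n hn α hα
end
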